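/- arXiv:math/0612079 — 6 statements merged into one kernel-verified Lean document; each statement's English description precedes it below -/
import Mathlib

section
/- The function c ↦ ‖π_T(c)‖₁ is differentiable on [0,1) with derivative d/dc ‖π_T(c)‖₁ = −α·u(I−cT)^{−2}(I−T)1; moreover, if at least one row sum of T is strictly less than 1, then this derivative is strictly negative for every c ∈ [0,1), so ‖π_T(c)‖₁ is strictly decreasing on [0,1). -/
open Matrix
open scoped NNReal

attribute [local instance] Matrix.linftyOpNormedRing Matrix.linftyOpNormedAlgebra

variable {n : ℕ}

lemma norm_le_one_of_rowsum (T : Matrix (Fin n) (Fin n) ℝ) (hT0 : ∀ i j, 0 ≤ T i j)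
    (hT1 : ∀ i, ∑ j, T i j ≤ 1) : ‖T‖ ≤ 1 := by
  rw [Matrix.linfty_opNorm_def]
  have : ((Finset.univ : Finset (Fin n)).sup fun i => ∑ j, ‖T i j‖₊) ≤ 1 := by
    apply Finset.sup_le
    intro i _
    have : ((∑ j, ‖T i j‖₊ : ℝ≥0) : ℝ) ≤ 1 := by
      push_cast
      calc ∑ j, (‖T i j‖₊ : ℝ) = ∑ j, T i j := by
            refine Finset.sum_congr rfl fun j _ => ?_
            simp [Real.nnnorm_of_nonneg (hT0 i j), hT0 i j]
        _ ≤ 1 := hT1 i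
    exact_mod_cast this
  exact_mod_cast this

section

variable (T : Matrix (Fin n) (Fin n) ℝ) (c : ℝ)

-- basic facts for c ∈ [0,1)
lemma smul_norm_lt (hT0 : ∀ i j, 0 ≤ T i j) (hT1 : ∀ i, ∑ j, T i j ≤ 1)
    (hc0 : 0 ≤ c) (hc1 : c < 1) : ‖c • T‖ < 1 := by
  calc ‖c • T‖ = |c| * ‖T‖ := by rw [norm_smul]; simp [Real.norm_eq_abs]
    _ ≤ c * 1 := by
        apply mul_le_mul (le_of_eq (abs_of_nonneg hc0)) (norm_le_one_of_rowsum T hT0 hT1)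
          (norm_nonneg _) hc0
    _ < 1 := by linarith

lemma isUnit_one_sub (h : ‖c • T‖ < 1) : IsUnit (1 - c • T) :=
  (Units.oneSub (c • T) h).isUnit

lemma hasSum_inv (h : ‖c • T‖ < 1) :
    HasSum (fun k => (c • T) ^ k) (1 - c • T)⁻¹ := by
  rw [Matrix.nonsing_inv_eq_ringInverse]
  exact hasSum_geom_series_inverse _ h

lemma inv_entries_nonneg (hT0 : ∀ i j, 0 ≤ T i j) (hc0 : 0 ≤ c) (h : ‖c • T‖ < 1)
    (i j : Fin n) : 0 ≤ (1 - c • T)⁻¹ i j := by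
  have hpow : ∀ k i j, 0 ≤ ((c • T) ^ k) i j := by
    intro k
    induction k with
    | zero => intro i j; by_cases hij : i = j <;> simp [Matrix.one_apply, hij]
    | succ k ih =>
      intro i j
      rw [pow_succ, Matrix.mul_apply]
      exact Finset.sum_nonneg fun l _ => mul_nonneg (ih i l)
        (by simpa using mul_nonneg hc0 (hT0 l j))
  have hentry : HasSum (fun k => ((c • T) ^ k) i j) ((1 - c • T)⁻¹ i j) := by
    exact (hasSum_inv T c h).map (Matrix.entryLinearMap ℝ ℝ i j).toAddMonoidHom
      ((continuous_apply j).comp (continuous_apply i))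
  exact hasSum_le (fun k => hpow k i j) hasSum_zero hentry

lemma hasDerivAt_matinv (h : ‖c • T‖ < 1) :
    HasDerivAt (fun c : ℝ => (1 - c • T)⁻¹)
      ((1 - c • T)⁻¹ * T * (1 - c • T)⁻¹) c := by
  have h1 : HasDerivAt (fun c : ℝ => 1 - c • T) (-T) c := by
    have h0 := ((hasDerivAt_id c).smul_const T).const_sub 1
    simp only [id, one_smul] at h0
    exact h0
  have h2 := (hasFDerivAt_ringInverse (𝕜 := ℝ) (Units.oneSub (c • T) h)).comp_hasDerivAt c h1
  have hBe : ((Units.oneSub (c • T) h)⁻¹ : (Matrix (Fin n) (Fin n) ℝ)ˣ).val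
      = (1 - c • T)⁻¹ := by
    rw [Matrix.coe_units_inv]
    rfl
  rw [hBe] at h2
  have h3 : HasDerivAt (fun c : ℝ => Ring.inverse (1 - c • T))
      ((1 - c • T)⁻¹ * T * (1 - c • T)⁻¹) c := by
    simp only [ContinuousLinearMap.neg_apply, ContinuousLinearMap.mulLeftRight_apply, mul_neg,
      neg_mul, neg_neg] at h2
    exact h2
  simpa only [Matrix.nonsing_inv_eq_ringInverse] using h3

end

/-- The PageRank mass `‖π_T(c)‖₁ = α(1-c)·u(I-cT)⁻¹1` is differentiable on `[0,1)` with
derivative `-α·u(I-cT)⁻²(I-T)1`; moreover, if some row sum of `T` is strictly less than `1`,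
this derivative is strictly negative on `[0,1)`, so the mass is strictly decreasing there. -/
theorem pagerank_mass_deriv (n : ℕ) (hn : 0 < n) (T : Matrix (Fin n) (Fin n) ℝ)
    (hT0 : ∀ i j, 0 ≤ T i j) (hT1 : ∀ i, ∑ j, T i j ≤ 1)
    (u : Fin n → ℝ) (hu : u = fun _ => (1 : ℝ) / n)
    (one : Fin n → ℝ) (hone : one = fun _ => (1 : ℝ))
    (α : ℝ) (hα : 0 < α)
    (mass : ℝ → ℝ)
    (hmass : ∀ c : ℝ, mass c = α * (1 - c) * (u ⬝ᵥ ((1 - c • T)⁻¹ *ᵥ one)))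
    (D : ℝ → ℝ)
    (hD : ∀ c : ℝ, D c = -(α * (u ⬝ᵥ (((1 - c • T)⁻¹ ^ 2) *ᵥ ((1 - T) *ᵥ one))))) :
    (∀ c ∈ Set.Ico (0 : ℝ) 1, HasDerivAt mass (D c) c) ∧
      ((∃ i, ∑ j, T i j < 1) →
        (∀ c ∈ Set.Ico (0 : ℝ) 1, D c < 0) ∧ StrictAntiOn mass (Set.Ico (0 : ℝ) 1)) := by
  have hmass' : mass = fun c => α * (1 - c) * (u ⬝ᵥ ((1 - c • T)⁻¹ *ᵥ one)) := funext hmass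
  -- the linear map M ↦ u ⬝ᵥ (M *ᵥ one)
  let φ : Matrix (Fin n) (Fin n) ℝ →ₗ[ℝ] ℝ :=
    { toFun := fun M => u ⬝ᵥ (M *ᵥ one)
      map_add' := fun M N => by simp [Matrix.add_mulVec, dotProduct_add]
      map_smul' := fun r M => by
        simp [Matrix.smul_mulVec, dotProduct_smul, smul_eq_mul] }
  have key : ∀ c ∈ Set.Ico (0 : ℝ) 1, HasDerivAt mass (D c) c := by
    rintro c ⟨hc0, hc1⟩
    have hlt := smul_norm_lt T c hT0 hT1 hc0 hc1
    have hdet : IsUnit (1 - c • T).det :=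
      (Matrix.isUnit_iff_isUnit_det _).1 (isUnit_one_sub T c hlt)
    set B := (1 - c • T)⁻¹ with hBdef
    have hBl : (1 - c • T) * B = 1 := Matrix.mul_nonsing_inv _ hdet
    have hBr : B * (1 - c • T) = 1 := Matrix.nonsing_inv_mul _ hdet
    have hBder := hasDerivAt_matinv T c hlt
    have hL : HasDerivAt (fun c : ℝ => u ⬝ᵥ ((1 - c • T)⁻¹ *ᵥ one))
        (u ⬝ᵥ ((B * T * B) *ᵥ one)) c := by
      exact (φ.toContinuousLinearMap.hasFDerivAt).comp_hasDerivAt c hBder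
    have h1 : HasDerivAt (fun c : ℝ => α * (1 - c)) (-α) c := by
      simpa using ((hasDerivAt_id c).const_sub 1).const_mul α
    have hprod := h1.mul hL
    -- matrix identity
    have hsum : (1 - c • T) - (1 - c) • T = 1 - T := by
      have h : c • T + (1 - c) • T = T := by rw [← add_smul]; simp
      rw [sub_sub, h]
    have e1 : (1 - T) * (1 - c • T) = (1 - c • T) * (1 - T) := by
      simp only [mul_sub, sub_mul, one_mul, mul_one, mul_smul_comm, smul_mul_assoc, smul_sub]
      abel
    have hcomm : B * (1 - T) = (1 - T) * B := by
      calc B * (1 - T) = B * (1 - T) * ((1 - c • T) * B) := by rw [hBl, mul_one]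
        _ = B * ((1 - T) * (1 - c • T)) * B := by simp only [mul_assoc]
        _ = B * ((1 - c • T) * (1 - T)) * B := by rw [e1]
        _ = (B * (1 - c • T)) * ((1 - T) * B) := by simp only [mul_assoc]
        _ = (1 - T) * B := by rw [hBr, one_mul]
    have hfac : (1 - T) * B = 1 - (1 - c) • (T * B) := by
      calc (1 - T) * B = ((1 - c • T) - (1 - c) • T) * B := by rw [hsum]
        _ = (1 - c • T) * B - ((1 - c) • T) * B := sub_mul _ _ _
        _ = 1 - (1 - c) • (T * B) := by rw [hBl, smul_mul_assoc]
    have hmat : B ^ 2 * (1 - T) = B - (1 - c) • (B * T * B) := by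
      calc B ^ 2 * (1 - T) = B * (B * (1 - T)) := by rw [pow_two, mul_assoc]
        _ = B * ((1 - T) * B) := by rw [hcomm]
        _ = B * (1 - (1 - c) • (T * B)) := by rw [hfac]
        _ = B - (1 - c) • (B * T * B) := by
            rw [mul_sub, mul_one, mul_smul_comm, ← mul_assoc]
    have hvec : (B ^ 2) *ᵥ ((1 - T) *ᵥ one)
        = B *ᵥ one - (1 - c) • ((B * T * B) *ᵥ one) := by
      rw [Matrix.mulVec_mulVec, hmat, Matrix.sub_mulVec, Matrix.smul_mulVec]
    have hval : D c = -α * (u ⬝ᵥ (B *ᵥ one)) + α * (1 - c) * (u ⬝ᵥ ((B * T * B) *ᵥ one)) := by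
      rw [hD c, ← hBdef, hvec, dotProduct_sub, dotProduct_smul, smul_eq_mul]
      ring
    rw [hmass', hval]
    exact hprod
  refine ⟨key, ?_⟩
  rintro ⟨i0, hi0⟩
  have hDneg : ∀ c ∈ Set.Ico (0 : ℝ) 1, D c < 0 := by
    rintro c ⟨hc0, hc1⟩
    have hlt := smul_norm_lt T c hT0 hT1 hc0 hc1
    have hdet : IsUnit (1 - c • T).det :=
      (Matrix.isUnit_iff_isUnit_det _).1 (isUnit_one_sub T c hlt)
    set B := (1 - c • T)⁻¹ with hBdef
    have hBl : (1 - c • T) * B = 1 := Matrix.mul_nonsing_inv _ hdet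
    have hBnn : ∀ i j, 0 ≤ B i j := inv_entries_nonneg T c hT0 hc0 hlt
    have hB1 : ∀ i, 1 ≤ B i i := by
      intro i
      have h2 : (0 : ℝ) ≤ ((c • T) * B) i i := by
        rw [Matrix.mul_apply]
        exact Finset.sum_nonneg fun l _ => mul_nonneg
          (by simpa using mul_nonneg hc0 (hT0 i l)) (hBnn l i)
      calc (1 : ℝ) = ((1 - c • T) * B) i i := by rw [hBl]; simp [Matrix.one_apply]
        _ ≤ ((1 - c • T) * B) i i + ((c • T) * B) i i := le_add_of_nonneg_right h2
        _ = B i i := by rw [← Matrix.add_apply, ← add_mul]; simp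
    have hB2nn : ∀ i j, 0 ≤ (B ^ 2) i j := by
      intro i j
      rw [pow_two, Matrix.mul_apply]
      exact Finset.sum_nonneg fun l _ => mul_nonneg (hBnn i l) (hBnn l j)
    have hB2 : ∀ i, 1 ≤ (B ^ 2) i i := by
      intro i
      rw [pow_two, Matrix.mul_apply]
      calc (1 : ℝ) ≤ B i i * B i i := by nlinarith [hB1 i]
        _ ≤ ∑ k, B i k * B k i :=
            Finset.single_le_sum (f := fun k => B i k * B k i)
              (fun k _ => mul_nonneg (hBnn i k) (hBnn k i)) (Finset.mem_univ i)
    set v := (1 - T) *ᵥ one with hvdef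
    have hveq : ∀ j, v j = 1 - ∑ k, T j k := by
      intro j
      rw [hvdef, hone]
      simp [Matrix.sub_mulVec, Matrix.mulVec, dotProduct, Matrix.one_mulVec, Matrix.one_apply]
    have hvnn : ∀ j, 0 ≤ v j := fun j => by rw [hveq]; linarith [hT1 j]
    have hw : ∀ i, 0 ≤ ((B ^ 2) *ᵥ v) i := by
      intro i
      rw [Matrix.mulVec, dotProduct]
      exact Finset.sum_nonneg fun j _ => mul_nonneg (hB2nn i j) (hvnn j)
    have hw0 : 0 < ((B ^ 2) *ᵥ v) i0 := by
      rw [Matrix.mulVec, dotProduct]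
      have hvi0 : 0 < v i0 := by rw [hveq]; linarith
      calc (0 : ℝ) < (B ^ 2) i0 i0 * v i0 := by nlinarith [hB2 i0]
        _ ≤ ∑ j, (B ^ 2) i0 j * v j :=
            Finset.single_le_sum (f := fun j => (B ^ 2) i0 j * v j)
              (fun j _ => mul_nonneg (hB2nn i0 j) (hvnn j)) (Finset.mem_univ i0)
    have hpos : 0 < u ⬝ᵥ ((B ^ 2) *ᵥ v) := by
      rw [dotProduct, hu]
      have hn' : (0 : ℝ) < 1 / n := by positivity
      refine Finset.sum_pos' (fun i _ => mul_nonneg (le_of_lt hn') (hw i)) ⟨i0, Finset.mem_univ i0, ?_⟩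
      exact mul_pos hn' hw0
    rw [hD c, ← hBdef]
    have := mul_pos hα hpos
    linarith
  refine ⟨hDneg, ?_⟩
  apply strictAntiOn_of_deriv_neg (convex_Ico 0 1)
  · exact fun x hx => (key x hx).continuousAt.continuousWithinAt
  · intro x hx
    rw [interior_Ico] at hx
    have hx' : x ∈ Set.Ico (0 : ℝ) 1 := ⟨le_of_lt hx.1, hx.2⟩
    rw [(key x hx').deriv]
    exact hDneg x hx'
end

section
/- Define p̲ := inf_{k≥1} (uT^k1)^{1/k} and p̄ := sup_{k≥1} (uT^k1)^{1/k}. Then p̄ ≤ 1 and, for every c ∈ (0,1), α(1−c)/(1−c·p̲) ≤ ‖π_T(c)‖₁ ≤ α(1−c)/(1−c·p̄). -/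
open Matrix Set

attribute [local instance] Matrix.linftyOpNormedAddCommGroup Matrix.linftyOpNormedRing
  Matrix.linftyOpNormedAlgebra Matrix.linftyOpNormedSpace

/-- With `p̲ = inf_{k≥1} (uTᵏ1)^{1/k}` and `p̄ = sup_{k≥1} (uTᵏ1)^{1/k}`, one has `p̄ ≤ 1`
and, for every `c ∈ (0,1)`,
`α(1-c)/(1-c·p̲) ≤ ‖π_T(c)‖₁ ≤ α(1-c)/(1-c·p̄)`. -/
theorem pagerank_mass_bounds (n : ℕ) (hn : 0 < n) (T : Matrix (Fin n) (Fin n) ℝ)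
    (hT0 : ∀ i j, 0 ≤ T i j) (hT1 : ∀ i, ∑ j, T i j ≤ 1)
    (u : Fin n → ℝ) (hu : u = fun _ => (1 : ℝ) / n)
    (one : Fin n → ℝ) (hone : one = fun _ => (1 : ℝ))
    (α : ℝ) (hα : 0 < α)
    (mass : ℝ → ℝ)
    (hmass : ∀ c : ℝ, mass c = α * (1 - c) * (u ⬝ᵥ ((1 - c • T)⁻¹ *ᵥ one)))
    (plow phigh : ℝ)
    (hplow : plow = ⨅ k : ℕ, (u ⬝ᵥ ((T ^ (k + 1)) *ᵥ one)) ^ ((1 : ℝ) / (k + 1)))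
    (hphigh : phigh = ⨆ k : ℕ, (u ⬝ᵥ ((T ^ (k + 1)) *ᵥ one)) ^ ((1 : ℝ) / (k + 1))) :
    phigh ≤ 1 ∧
      ∀ c ∈ Set.Ioo (0 : ℝ) 1,
        α * (1 - c) / (1 - c * plow) ≤ mass c ∧
          mass c ≤ α * (1 - c) / (1 - c * phigh) := by
  -- powers of T are substochastic
  have hpow : ∀ k : ℕ, (∀ i j, 0 ≤ (T ^ k) i j) ∧ (∀ i, ∑ j, (T ^ k) i j ≤ 1) := by
    intro k
    induction k with
    | zero =>
      constructor
      · intro i j; simp [Matrix.one_apply]; positivity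
      · intro i; simp [Matrix.one_apply]
    | succ k ih =>
      have h0 : ∀ i j, 0 ≤ (T ^ (k + 1)) i j := by
        intro i j
        rw [pow_succ, Matrix.mul_apply]
        exact Finset.sum_nonneg fun l _ => mul_nonneg (ih.1 i l) (hT0 l j)
      refine ⟨h0, fun i => ?_⟩
      calc ∑ j, (T ^ (k + 1)) i j = ∑ l, (T ^ k) i l * ∑ j, T l j := by
            simp_rw [pow_succ, Matrix.mul_apply, Finset.mul_sum]
            rw [Finset.sum_comm]
        _ ≤ ∑ l, (T ^ k) i l * 1 := by
            refine Finset.sum_le_sum fun l _ => mul_le_mul_of_nonneg_left (hT1 l) (ih.1 i l)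
        _ ≤ 1 := by simpa using ih.2 i
  -- the sequence b
  set b : ℕ → ℝ := fun k => u ⬝ᵥ ((T ^ k) *ᵥ one) with hb
  have hb_eq : ∀ k, b k = (1 / n) * ∑ i, ∑ j, (T ^ k) i j := by
    intro k
    simp [hb, hu, hone, dotProduct, Matrix.mulVec, Finset.mul_sum]
  have hb0 : ∀ k, 0 ≤ b k := by
    intro k
    rw [hb_eq]
    have : (0:ℝ) ≤ ∑ i, ∑ j, (T ^ k) i j :=
      Finset.sum_nonneg fun i _ => Finset.sum_nonneg fun j _ => (hpow k).1 i j
    positivity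
  have hb1 : ∀ k, b k ≤ 1 := by
    intro k
    rw [hb_eq]
    have : ∑ i, ∑ j, (T ^ k) i j ≤ ∑ _i : Fin n, (1:ℝ) :=
      Finset.sum_le_sum fun i _ => (hpow k).2 i
    have hn' : (0:ℝ) < n := by exact_mod_cast hn
    calc (1 / (n:ℝ)) * ∑ i, ∑ j, (T ^ k) i j ≤ (1 / n) * ∑ _i : Fin n, (1:ℝ) := by
          apply mul_le_mul_of_nonneg_left this; positivity
      _ = 1 := by rw [Finset.sum_const, Finset.card_univ, Fintype.card_fin, nsmul_eq_mul, mul_one]; field_simp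
  have hbzero : b 0 = 1 := by
    rw [hb_eq]
    simp [Matrix.one_apply]
    field_simp
  -- bounds on plow, phigh
  have hbdd : BddAbove (Set.range fun k : ℕ => (b (k + 1)) ^ ((1 : ℝ) / (k + 1))) := by
    refine ⟨1, ?_⟩
    rintro x ⟨k, rfl⟩
    exact Real.rpow_le_one (hb0 _) (hb1 _) (by positivity)
  have hphigh1 : phigh ≤ 1 := by
    rw [hphigh]
    exact ciSup_le fun k => Real.rpow_le_one (hb0 _) (hb1 _) (by positivity)
  have hplow0 : 0 ≤ plow := by
    rw [hplow]
    exact le_ciInf fun k => Real.rpow_nonneg (hb0 _) _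
  have hplowhigh : plow ≤ phigh := by
    rw [hplow, hphigh]
    exact (ciInf_le ⟨0, fun x ⟨k, hk⟩ => hk ▸ Real.rpow_nonneg (hb0 _) _⟩ 0).trans
      (le_ciSup hbdd 0)
  have hphigh0 : 0 ≤ phigh := hplow0.trans hplowhigh
  -- power bounds on b
  have hb_low : ∀ k, plow ^ k ≤ b k := by
    intro k
    cases k with
    | zero => simp [hbzero]
    | succ k =>
      have h1 : plow ≤ (b (k + 1)) ^ ((1 : ℝ) / (k + 1)) := by
        rw [hplow]
        exact ciInf_le ⟨0, fun x ⟨m, hm⟩ => hm ▸ Real.rpow_nonneg (hb0 _) _⟩ k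
      calc plow ^ (k + 1) ≤ ((b (k + 1)) ^ ((1 : ℝ) / (k + 1))) ^ (k + 1) :=
            pow_le_pow_left₀ hplow0 h1 _
        _ = b (k + 1) := by
            rw [one_div, ← Real.rpow_natCast (_ ^ _), ← Real.rpow_mul (hb0 _)]
            push_cast
            rw [inv_mul_cancel₀ (by positivity), Real.rpow_one]
  have hb_high : ∀ k, b k ≤ phigh ^ k := by
    intro k
    cases k with
    | zero => simp [hbzero]
    | succ k =>
      have h1 : (b (k + 1)) ^ ((1 : ℝ) / (k + 1)) ≤ phigh := by
        rw [hphigh]; exact le_ciSup hbdd k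
      calc b (k + 1) = ((b (k + 1)) ^ ((1 : ℝ) / (k + 1))) ^ (k + 1) := by
            rw [one_div, ← Real.rpow_natCast (_ ^ _), ← Real.rpow_mul (hb0 _)]
            push_cast
            rw [inv_mul_cancel₀ (by positivity), Real.rpow_one]
        _ ≤ phigh ^ (k + 1) := pow_le_pow_left₀ (Real.rpow_nonneg (hb0 _) _) h1 _
  refine ⟨hphigh1, fun c hc => ?_⟩
  obtain ⟨hc0, hc1⟩ := hc
  -- norm bound
  have hTn : ‖T‖ ≤ 1 := by
    rw [Matrix.linfty_opNorm_def]
    have : ∀ i, ∑ j, ‖T i j‖₊ ≤ 1 := by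
      intro i
      rw [← NNReal.coe_le_coe]
      push_cast
      calc ∑ j, (‖T i j‖₊ : ℝ) = ∑ j, T i j := by
            refine Finset.sum_congr rfl fun j _ => ?_
            simp [Real.nnnorm_of_nonneg (hT0 i j), hT0 i j, abs_of_nonneg]
        _ ≤ 1 := hT1 i
    exact_mod_cast Finset.sup_le fun i _ => this i
  have hcT : ‖c • T‖ < 1 := by
    rw [norm_smul]
    calc ‖c‖ * ‖T‖ ≤ ‖c‖ * 1 := by
          apply mul_le_mul_of_nonneg_left hTn (norm_nonneg _)
      _ = |c| := by simp [Real.norm_eq_abs]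
      _ < 1 := by rw [abs_of_pos hc0]; exact hc1
  -- Neumann series
  have hinv : (1 - c • T)⁻¹ = ∑' k : ℕ, (c • T) ^ k := by
    rw [Matrix.nonsing_inv_eq_ringInverse, ← geom_series_eq_inverse _ hcT]; rfl
  -- the linear functional
  let f : Matrix (Fin n) (Fin n) ℝ →ₗ[ℝ] ℝ :=
    { toFun := fun M => u ⬝ᵥ (M *ᵥ one)
      map_add' := by intro M N; simp [Matrix.add_mulVec, dotProduct_add]
      map_smul' := by intro r M; simp [Matrix.smul_mulVec, dotProduct_smul] }
  have hfc : Continuous f := f.continuous_of_finiteDimensional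
  have hsum : Summable fun k : ℕ => (c • T) ^ k := summable_geometric_of_norm_lt_one hcT
  have hseries : u ⬝ᵥ ((1 - c • T)⁻¹ *ᵥ one) = ∑' k : ℕ, c ^ k * b k := by
    rw [hinv]
    have h1 := f.toContinuousLinearMap.map_tsum hsum
    simp only [LinearMap.coe_toContinuousLinearMap'] at h1
    have h2 : f (∑' k : ℕ, (c • T) ^ k) = ∑' k : ℕ, f ((c • T) ^ k) := h1
    calc u ⬝ᵥ ((∑' k : ℕ, (c • T) ^ k) *ᵥ one) = ∑' k : ℕ, f ((c • T) ^ k) := h2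
      _ = ∑' k : ℕ, c ^ k * b k := by
          congr 1; funext k
          show u ⬝ᵥ ((c • T) ^ k *ᵥ one) = _
          rw [smul_pow, Matrix.smul_mulVec, dotProduct_smul, smul_eq_mul]
  have hplow1 : plow ≤ 1 := hplowhigh.trans hphigh1
  have hcpl : c * plow < 1 := (mul_le_of_le_one_right hc0.le hplow1).trans_lt hc1
  have hcph : c * phigh < 1 := (mul_le_of_le_one_right hc0.le hphigh1).trans_lt hc1
  have hsummid : Summable fun k : ℕ => c ^ k * b k :=
    Summable.of_nonneg_of_le (fun k => mul_nonneg (pow_nonneg hc0.le k) (hb0 k))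
      (fun k => by
        calc c ^ k * b k ≤ c ^ k * 1 := mul_le_mul_of_nonneg_left (hb1 k) (pow_nonneg hc0.le k)
          _ = c ^ k := mul_one _)
      (summable_geometric_of_lt_one hc0.le hc1)
  have hlow : (1 - c * plow)⁻¹ ≤ ∑' k, c ^ k * b k := by
    rw [← tsum_geometric_of_lt_one (mul_nonneg hc0.le hplow0) hcpl]
    apply Summable.tsum_le_tsum _ (summable_geometric_of_lt_one (mul_nonneg hc0.le hplow0) hcpl) hsummid
    intro k
    rw [mul_pow]
    exact mul_le_mul_of_nonneg_left (hb_low k) (pow_nonneg hc0.le k)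
  have hhigh : ∑' k, c ^ k * b k ≤ (1 - c * phigh)⁻¹ := by
    rw [← tsum_geometric_of_lt_one (mul_nonneg hc0.le hphigh0) hcph]
    apply Summable.tsum_le_tsum _ hsummid (summable_geometric_of_lt_one (mul_nonneg hc0.le hphigh0) hcph)
    intro k
    rw [mul_pow]
    exact mul_le_mul_of_nonneg_left (hb_high k) (pow_nonneg hc0.le k)
  have hαc : 0 ≤ α * (1 - c) := by nlinarith
  rw [hmass c, hseries]
  constructor
  · rw [div_eq_mul_inv]
    exact mul_le_mul_of_nonneg_left hlow hαc
  · rw [div_eq_mul_inv]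
    exact mul_le_mul_of_nonneg_left hhigh hαc
end

section
/- The matrix I − cP is invertible, the row vector π := ((1−c)/n)·1ᵀ(I−cP)^{−1} has nonnegative entries, and π is the unique row vector satisfying πG = π and π1 = 1, where G := cP + ((1−c)/n)E. -/
open Matrix

lemma pagerank_aux (n : ℕ) (hn : 0 < n) (P : Matrix (Fin n) (Fin n) ℝ)
    (hP0 : ∀ i j, 0 ≤ P i j) (hP1 : ∀ i, ∑ j, P i j = 1)
    (c : ℝ) (hc : c ∈ Set.Ioo (0 : ℝ) 1) :
    IsUnit (1 - c • P) ∧ ∀ i j, 0 ≤ (1 - c • P)⁻¹ i j := by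
  letI := Matrix.linftyOpNormedRing (n := Fin n) (α := ℝ)
  letI : CompleteSpace (Matrix (Fin n) (Fin n) ℝ) :=
    (inferInstance : CompleteSpace (Fin n → Fin n → ℝ))
  letI : HasSummableGeomSeries (Matrix (Fin n) (Fin n) ℝ) :=
    @instHasSummableGeomSeriesOfCompleteSpace _ (Matrix.linftyOpNormedRing (n := Fin n) (α := ℝ)) this
  have hnorm : ‖c • P‖ < 1 := by
    rw [Matrix.linfty_opNorm_def, ← NNReal.coe_one, NNReal.coe_lt_coe]
    rw [Finset.sup_lt_iff (by simp : (⊥ : NNReal) < 1)]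
    intro i _
    rw [← NNReal.coe_lt_coe]
    push_cast
    have hj : ∀ j, ‖(c • P) i j‖ = c * P i j := fun j => by
      rw [Matrix.smul_apply, smul_eq_mul,
        Real.norm_of_nonneg (mul_nonneg hc.1.le (hP0 i j))]
    calc ∑ j, ‖(c • P) i j‖ = ∑ j, c * P i j := Finset.sum_congr rfl fun j _ => hj j
      _ = c := by rw [← Finset.mul_sum, hP1 i, mul_one]
      _ < 1 := hc.2
  have hU : IsUnit (1 - c • P) := isUnit_one_sub_of_norm_lt_one hnorm
  refine ⟨hU, fun i j => ?_⟩
  have hinv : (1 - c • P)⁻¹ = Ring.inverse (1 - c • P) :=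
    Matrix.nonsing_inv_eq_ringInverse _
  have hgeom : HasSum (fun k : ℕ => (c • P) ^ k) (Ring.inverse (1 - c • P)) :=
    hasSum_geom_series_inverse _ hnorm
  have hentry : HasSum (fun k : ℕ => ((c • P) ^ k) i j)
      ((Ring.inverse (1 - c • P)) i j) :=
    hgeom.map (AddMonoidHom.mk' (fun A : Matrix (Fin n) (Fin n) ℝ => A i j)
      (fun A B => rfl)) ((continuous_apply j).comp (continuous_apply i))
  have hpow : ∀ k : ℕ, ∀ i j : Fin n, 0 ≤ ((c • P) ^ k) i j := by
    intro k
    induction k with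
    | zero => intro i j; rw [pow_zero]; by_cases h : i = j <;> simp [Matrix.one_apply, h]
    | succ k ih =>
      intro i j
      rw [pow_succ, Matrix.mul_apply]
      exact Finset.sum_nonneg fun l _ => mul_nonneg (ih i l)
        (by simpa using mul_nonneg hc.1.le (hP0 l j))
  rw [hinv, ← hentry.tsum_eq]
  exact tsum_nonneg fun k => hpow k i j

/-- For a row-stochastic matrix `P` and `c ∈ (0,1)`, the matrix `I - cP` is invertible,
the row vector `π = ((1-c)/n)·1ᵀ(I-cP)⁻¹` is nonnegative, and `π` is the unique row vector
satisfying `πG = π` and `π1 = 1`, where `G = cP + ((1-c)/n)E` and `E` is the all-ones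
matrix. -/
theorem pagerank_unique_stationary (n : ℕ) (hn : 0 < n) (P : Matrix (Fin n) (Fin n) ℝ)
    (hP0 : ∀ i j, 0 ≤ P i j) (hP1 : ∀ i, ∑ j, P i j = 1)
    (c : ℝ) (hc : c ∈ Set.Ioo (0 : ℝ) 1)
    (E : Matrix (Fin n) (Fin n) ℝ) (hE : E = Matrix.of fun _ _ => (1 : ℝ))
    (G : Matrix (Fin n) (Fin n) ℝ) (hG : G = c • P + ((1 - c) / n) • E)
    (π : Fin n → ℝ)
    (hπ : π = fun j => ((1 - c) / n) * ∑ i, (1 - c • P)⁻¹ i j) :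
    IsUnit (1 - c • P) ∧
      (∀ j, 0 ≤ π j) ∧
      π ᵥ* G = π ∧ ∑ j, π j = 1 ∧
      ∀ ρ : Fin n → ℝ, ρ ᵥ* G = ρ → ∑ j, ρ j = 1 → ρ = π := by
  obtain ⟨hU, hBnn⟩ := pagerank_aux n hn P hP0 hP1 c hc
  set B : Matrix (Fin n) (Fin n) ℝ := (1 - c • P)⁻¹ with hB
  have hdet : IsUnit (1 - c • P).det := (Matrix.isUnit_iff_isUnit_det _).mp hU
  have hBA : B * (1 - c • P) = 1 := Matrix.nonsing_inv_mul _ hdet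
  have hAB : (1 - c • P) * B = 1 := Matrix.mul_nonsing_inv _ hdet
  set v : Fin n → ℝ := fun _ => (1 : ℝ) with hv
  have hπv : π = ((1 - c) / n) • (v ᵥ* B) := by
    funext j
    simp [hπ, Matrix.vecMul, dotProduct, hv]
  have hsmulR : ∀ (a : ℝ) (M : Matrix (Fin n) (Fin n) ℝ) (w : Fin n → ℝ),
      w ᵥ* (a • M) = a • (w ᵥ* M) := by
    intro a M w; funext j
    simp [Matrix.vecMul, dotProduct, Finset.mul_sum, mul_left_comm]
  -- key equation: π ᵥ* (1 - c•P) = ((1-c)/n) • v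
  have hkey : π ᵥ* (1 - c • P) = ((1 - c) / n) • v := by
    rw [hπv, Matrix.smul_vecMul, Matrix.vecMul_vecMul, hBA, Matrix.vecMul_one]
  have hn' : (0 : ℝ) < n := by exact_mod_cast hn
  -- sum of π is 1
  have hsum : ∑ j, π j = 1 := by
    have h1 : ∀ j, π j - (π ᵥ* (c • P)) j = (1 - c) / n := by
      intro j
      have := congrFun hkey j
      rw [Matrix.vecMul_sub, Matrix.vecMul_one] at this
      simpa [hv] using this
    have h2 : ∑ j, (π j - (π ᵥ* (c • P)) j) = (1 - c) / n * n := by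
      rw [Finset.sum_congr rfl fun j _ => h1 j]
      simp [Finset.sum_const, mul_comm]
    have h3 : ∑ j, (π ᵥ* (c • P)) j = c * ∑ i, π i := by
      simp only [Matrix.vecMul, dotProduct, Matrix.smul_apply, smul_eq_mul]
      rw [Finset.sum_comm]
      rw [Finset.mul_sum]
      refine Finset.sum_congr rfl fun i _ => ?_
      calc ∑ j, π i * (c * P i j) = π i * c * ∑ j, P i j := by
            rw [Finset.mul_sum]; ring_nf
        _ = c * π i := by rw [hP1 i]; ring
    rw [Finset.sum_sub_distrib, h3, div_mul_cancel₀ _ (ne_of_gt hn')] at h2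
    have hc1 : (1 : ℝ) - c ≠ 0 := by nlinarith [hc.2]
    have : (1 - c) * (∑ j, π j) = (1 - c) * 1 := by ring_nf; ring_nf at h2; linarith
    exact mul_left_cancel₀ hc1 this
  -- π E = v (since sum π = 1)
  have hπE : π ᵥ* E = v := by
    funext j
    simp only [hE, Matrix.vecMul, dotProduct, Matrix.of_apply, mul_one, hv]
    exact hsum
  have hstat : π ᵥ* G = π := by
    have h4 := hkey
    rw [Matrix.vecMul_sub, Matrix.vecMul_one, hsmulR] at h4
    rw [hG, Matrix.vecMul_add, hsmulR, hsmulR, hπE]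
    have h5 : c • (π ᵥ* P) = π - ((1 - c) / ↑n) • v := by rw [← h4]; abel
    rw [h5]; abel
  refine ⟨hU, ?_, hstat, hsum, ?_⟩
  · intro j
    rw [hπ]
    have hcn : 0 ≤ (1 - c) / n := div_nonneg (by linarith [hc.2]) hn'.le
    exact mul_nonneg hcn (Finset.sum_nonneg fun i _ => hBnn i j)
  · intro ρ hρG hρ1
    have hρE : ρ ᵥ* E = v := by
      funext j
      simp only [hE, Matrix.vecMul, dotProduct, Matrix.of_apply, mul_one, hv]
      exact hρ1
    have hkeyρ : ρ ᵥ* (1 - c • P) = ((1 - c) / n) • v := by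
      rw [hG, Matrix.vecMul_add, hsmulR, hsmulR, hρE] at hρG
      rw [Matrix.vecMul_sub, Matrix.vecMul_one, hsmulR]
      nth_rewrite 1 [← hρG]
      abel
    calc ρ = ρ ᵥ* 1 := (Matrix.vecMul_one ρ).symm
      _ = ρ ᵥ* ((1 - c • P) * B) := by rw [hAB]
      _ = (ρ ᵥ* (1 - c • P)) ᵥ* B := (Matrix.vecMul_vecMul _ _ _).symm
      _ = ((1 - c) / n) • (v ᵥ* B) := by rw [hkeyρ, Matrix.smul_vecMul]
      _ = π := hπv.symm
end

section
/- Suppose the n×n row-stochastic matrix P has the block lower-triangular form P = [[Q, 0], [R, T]], where Q is n_Q×n_Q, T is n_T×n_T (so n = n_Q + n_T), and the zero block indicates no transitions from the Q-states to the T-states. Then for every c ∈ (0,1), the restriction of the row vector π := ((1−c)/n)·1ᵀ(I−cP)^{−1} to the T-states equals α(1−c)·u_T(I−cT)^{−1}, where α := n_T/n and u_T is the uniform probability row vector on the T-states. -/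
open Matrix
open scoped NNReal

section Aux

attribute [local instance] Matrix.linftyOpNormedRing Matrix.linftyOpNormedAlgebra

lemma aux_isUnit_one_sub_smul {m : Type*} [Fintype m] [DecidableEq m]
    (M : Matrix m m ℝ) (h0 : ∀ i j, 0 ≤ M i j) (h1 : ∀ i, ∑ j, M i j ≤ 1)
    {c : ℝ} (hc0 : 0 ≤ c) (hc1 : c < 1) : IsUnit (1 - c • M) := by
  haveI : CompleteSpace (Matrix m m ℝ) := FiniteDimensional.complete ℝ _
  have hMnorm : ‖M‖ ≤ 1 := by
    rw [Matrix.linfty_opNorm_def]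
    have : ((Finset.univ : Finset m).sup fun i => ∑ j, ‖M i j‖₊) ≤ 1 := by
      apply Finset.sup_le
      intro i _
      have : ((∑ j, ‖M i j‖₊ : ℝ≥0) : ℝ) ≤ 1 := by
        push_cast
        simp only [coe_nnnorm, Real.norm_eq_abs]
        calc ∑ j, |M i j| = ∑ j, M i j := by
              exact Finset.sum_congr rfl fun j _ => abs_of_nonneg (h0 i j)
          _ ≤ 1 := h1 i
      exact_mod_cast this
    exact_mod_cast this
  have hnorm : ‖c • M‖ < 1 := by
    rw [norm_smul, Real.norm_eq_abs, abs_of_nonneg hc0]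
    calc c * ‖M‖ ≤ c * 1 := by nlinarith [norm_nonneg M]
      _ < 1 := by linarith
  have := (Units.oneSub (c • M) hnorm).isUnit
  rwa [Units.val_oneSub] at this

end Aux

/-- If the row-stochastic matrix `P` has block lower-triangular form `[[Q, 0], [R, T]]`
(no transitions from the `Q`-states to the `T`-states), then for every `c ∈ (0,1)` the
restriction of the PageRank vector `π = ((1-c)/n)·1ᵀ(I-cP)⁻¹` to the `T`-states equals
`α(1-c)·u_T(I-cT)⁻¹`, where `α = n_T/n` and `u_T` is uniform on the `T`-states. -/
theorem pagerank_restriction_block (nQ nT : ℕ)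
    (P : Matrix (Fin nQ ⊕ Fin nT) (Fin nQ ⊕ Fin nT) ℝ)
    (hP0 : ∀ s t, 0 ≤ P s t) (hP1 : ∀ s, ∑ t, P s t = 1)
    (hblock : ∀ (i : Fin nQ) (j : Fin nT), P (Sum.inl i) (Sum.inr j) = 0)
    (T : Matrix (Fin nT) (Fin nT) ℝ) (hT : T = P.submatrix Sum.inr Sum.inr)
    (n : ℕ) (hn : n = nQ + nT)
    (α : ℝ) (hα : α = (nT : ℝ) / n)
    (uT : Fin nT → ℝ) (huT : uT = fun _ => (1 : ℝ) / nT)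
    (c : ℝ) (hc : c ∈ Set.Ioo (0 : ℝ) 1)
    (π : Fin nQ ⊕ Fin nT → ℝ)
    (hπ : π = fun s => ((1 - c) / n) * ∑ s', (1 - c • P)⁻¹ s' s) :
    ∀ j : Fin nT, π (Sum.inr j) = α * (1 - c) * (uT ᵥ* (1 - c • T)⁻¹) j := by
  intro j
  obtain ⟨hc0, hc1⟩ := hc
  set Q : Matrix (Fin nQ) (Fin nQ) ℝ := P.submatrix Sum.inl Sum.inl with hQ
  set R : Matrix (Fin nT) (Fin nQ) ℝ := P.submatrix Sum.inr Sum.inl with hR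
  -- block decomposition of 1 - c•P
  have hblockP : (1 : Matrix _ _ ℝ) - c • P =
      fromBlocks (1 - c • Q) 0 (-(c • R)) (1 - c • T) := by
    ext s t
    cases s <;> cases t <;>
      simp [fromBlocks, Matrix.sub_apply, Matrix.smul_apply, Matrix.one_apply, hQ, hR, hT,
        hblock, Sum.elim_inl, Sum.elim_inr]
  -- invertibility of the diagonal blocks
  have hQunit : IsUnit ((1 : Matrix (Fin nQ) (Fin nQ) ℝ) - c • Q) := by
    apply aux_isUnit_one_sub_smul _ (fun i j => hP0 _ _) _ (le_of_lt hc0) hc1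
    intro i
    have := hP1 (Sum.inl i)
    rw [Fintype.sum_sum_type] at this
    have hz : ∑ t : Fin nT, P (Sum.inl i) (Sum.inr t) = 0 :=
      Finset.sum_eq_zero fun t _ => hblock i t
    show ∑ t : Fin nQ, P (Sum.inl i) (Sum.inl t) ≤ 1
    linarith
  have hTunit : IsUnit ((1 : Matrix (Fin nT) (Fin nT) ℝ) - c • T) := by
    apply aux_isUnit_one_sub_smul _ (fun i j => by rw [hT]; exact hP0 _ _) _ (le_of_lt hc0) hc1
    intro i
    have := hP1 (Sum.inr i)
    rw [Fintype.sum_sum_type] at this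
    have hnn : 0 ≤ ∑ t : Fin nQ, P (Sum.inr i) (Sum.inl t) :=
      Finset.sum_nonneg fun t _ => hP0 _ _
    rw [hT]
    show ∑ t : Fin nT, P (Sum.inr i) (Sum.inr t) ≤ 1
    linarith
  -- inverse formula
  have hinv : ((1 : Matrix _ _ ℝ) - c • P)⁻¹ =
      fromBlocks (1 - c • Q)⁻¹ 0
        (-((1 - c • T)⁻¹ * (-(c • R)) * (1 - c • Q)⁻¹)) (1 - c • T)⁻¹ := by
    rw [hblockP]
    exact inv_fromBlocks_zero₁₂_of_isUnit_iff _ _ _ (iff_of_true hQunit hTunit)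
  -- nT and n are nonzero
  have hnT : (0 : ℕ) < nT := j.pos
  have hnTne : (nT : ℝ) ≠ 0 := Nat.cast_ne_zero.mpr hnT.ne'
  have hnne : (n : ℝ) ≠ 0 := by
    have : 0 < n := by omega
    exact Nat.cast_ne_zero.mpr this.ne'
  -- compute both sides
  rw [hπ, hα, huT]
  simp only [hinv, Fintype.sum_sum_type, fromBlocks_apply₁₂, fromBlocks_apply₂₂,
    Matrix.zero_apply, Finset.sum_const_zero, zero_add, Matrix.vecMul, dotProduct]
  rw [Finset.mul_sum, Finset.mul_sum]
  apply Finset.sum_congr rfl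
  intro i _
  field_simp
end

section
/- As c → 1 from below, the PageRank vector π(c) := ((1−c)/n)·1ᵀ(I−cP)^{−1} converges; its limit equals 0 at every state of B, and at the states of each closed class A_i it equals the row vector π̄_i := (n_i/n + (n_B/n)·u_B(I−T̃)^{−1}R̃_i 1)·μ_i. -/
open Matrix Filter Set Topology

lemma pg_pow_nonneg {N : Type*} [Fintype N] [DecidableEq N] (Q : Matrix N N ℝ)
    (h0 : ∀ x y, 0 ≤ Q x y) (k : ℕ) (x y : N) : 0 ≤ (Q ^ k) x y := by
  induction k generalizing x y with
  | zero => simp [Matrix.one_apply]; positivity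
  | succ k ih =>
    rw [pow_succ, Matrix.mul_apply]
    exact Finset.sum_nonneg fun z _ => mul_nonneg (ih x z) (h0 z y)

lemma pg_pow_rowsum {N : Type*} [Fintype N] [DecidableEq N] (Q : Matrix N N ℝ)
    (h1 : ∀ x, ∑ y, Q x y = 1) (k : ℕ) (x : N) : ∑ y, (Q ^ k) x y = 1 := by
  induction k generalizing x with
  | zero => simp [Matrix.one_apply]
  | succ k ih =>
    simp only [pow_succ, Matrix.mul_apply]
    rw [Finset.sum_comm]
    calc ∑ z, ∑ y, (Q ^ k) x z * Q z y = ∑ z, (Q ^ k) x z * ∑ y, Q z y := by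
          simp [Finset.mul_sum]
      _ = 1 := by simp [h1, ih]

lemma pg_harmonic {N : Type*} [Fintype N] [DecidableEq N] (Q : Matrix N N ℝ)
    (h0 : ∀ x y, 0 ≤ Q x y) (h1 : ∀ x, ∑ y, Q x y = 1)
    (hirr : ∀ x y, ∃ k, 0 < (Q ^ k) x y) (v : N → ℝ) (hv : Q *ᵥ v = v) (x y : N) :
    v x = v y := by
  have hpv : ∀ k, (Q ^ k) *ᵥ v = v := by
    intro k
    induction k with
    | zero => simp
    | succ k ih => rw [pow_succ, ← Matrix.mulVec_mulVec, hv, ih]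
  have hne : (Finset.univ : Finset N).Nonempty := ⟨x, Finset.mem_univ x⟩
  obtain ⟨x₀, -, hx₀⟩ := Finset.exists_max_image Finset.univ v hne
  have key : ∀ z, v z = v x₀ := by
    intro z
    obtain ⟨k, hk⟩ := hirr x₀ z
    have hsum : ∑ w, (Q ^ k) x₀ w * (v x₀ - v w) = 0 := by
      simp only [mul_sub, Finset.sum_sub_distrib]
      rw [← Finset.sum_mul, pg_pow_rowsum Q h1, one_mul]
      have : ∑ w, (Q ^ k) x₀ w * v w = ((Q ^ k) *ᵥ v) x₀ := rfl
      rw [this, hpv, sub_self]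
    have hterm : ∀ w ∈ Finset.univ, 0 ≤ (Q ^ k) x₀ w * (v x₀ - v w) := fun w _ =>
      mul_nonneg (pg_pow_nonneg Q h0 k x₀ w) (sub_nonneg.mpr (hx₀ w (Finset.mem_univ w)))
    have := (Finset.sum_eq_zero_iff_of_nonneg hterm).mp hsum z (Finset.mem_univ z)
    rcases mul_eq_zero.mp this with h | h
    · exact absurd h hk.ne'
    · linarith [sub_eq_zero.mp h]
  rw [key x, key y]

lemma pg_det_ne_zero {N : Type*} [Fintype N] [DecidableEq N] (P : Matrix N N ℝ)
    (h0 : ∀ x y, 0 ≤ P x y) (h1 : ∀ x, ∑ y, P x y = 1) {c : ℝ} (hc0 : 0 ≤ c) (hc1 : c < 1) :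
    ((1 : Matrix N N ℝ) - c • P).det ≠ 0 := by
  cases isEmpty_or_nonempty N
  · simp [Matrix.det_isEmpty]
  intro hdet
  obtain ⟨v, hv0, hv⟩ := (Matrix.exists_mulVec_eq_zero_iff).mpr hdet
  have hvc : ∀ s, v s = c * ∑ t, P s t * v t := by
    intro s
    have := congrFun hv s
    simp only [Matrix.mulVec, dotProduct, Matrix.sub_apply, Matrix.one_apply,
      Matrix.smul_apply, smul_eq_mul, Pi.zero_apply, sub_mul, ite_mul, one_mul, zero_mul,
      Finset.sum_sub_distrib, Finset.sum_ite_eq, Finset.mem_univ, if_true, mul_assoc] at this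
    rw [← Finset.mul_sum] at this
    linarith
  obtain ⟨s₀, -, hs₀⟩ := Finset.exists_max_image Finset.univ (fun s => |v s|)
    ⟨Classical.arbitrary N, Finset.mem_univ _⟩
  have hM : |v s₀| ≤ c * |v s₀| := by
    calc |v s₀| = c * |∑ t, P s₀ t * v t| := by
          rw [hvc s₀, abs_mul, abs_of_nonneg hc0]
      _ ≤ c * ∑ t, P s₀ t * |v s₀| := by
          refine mul_le_mul_of_nonneg_left ?_ hc0
          refine (Finset.abs_sum_le_sum_abs _ _).trans ?_
          refine Finset.sum_le_sum fun t _ => ?_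
          rw [abs_mul, abs_of_nonneg (h0 s₀ t)]
          exact mul_le_mul_of_nonneg_left (hs₀ t (Finset.mem_univ t)) (h0 s₀ t)
      _ = c * |v s₀| := by rw [← Finset.sum_mul, h1, one_mul]
  have hvz : v s₀ = 0 := by
    by_contra h
    have : 0 < |v s₀| := abs_pos.mpr h
    nlinarith
  apply hv0
  funext s
  have := hs₀ s (Finset.mem_univ s)
  rw [hvz, abs_zero] at this
  exact abs_eq_zero.mp (le_antisymm this (abs_nonneg _))


lemma pg_abel_limit {N : Type*} [Fintype N] [DecidableEq N] (P E : Matrix N N ℝ)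
    (hPE : P * E = E) (hEP : E * P = E) (hEE : E * E = E)
    (hdetP : ∀ c : ℝ, 0 ≤ c → c < 1 → ((1 : Matrix N N ℝ) - c • P).det ≠ 0)
    (hdetA : ((1 : Matrix N N ℝ) - (P - E)).det ≠ 0) :
    Tendsto (fun c : ℝ => (1 - c) • ((1 : Matrix N N ℝ) - c • P)⁻¹) (𝓝[<] (1:ℝ)) (𝓝 E) := by
  set A : ℝ → Matrix N N ℝ := fun c => 1 - c • (P - E) with hA
  have hAcont : Continuous A := by
    apply continuous_const.sub
    exact continuous_id.smul continuous_const
  have hA1 : (A 1).det ≠ 0 := by simpa [hA, one_smul] using hdetA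
  have hdetc : Continuous fun c => (A c).det := hAcont.matrix_det
  have hev1 : ∀ᶠ c in 𝓝[<] (1:ℝ), (A c).det ≠ 0 :=
    ((hdetc.tendsto 1).mono_left nhdsWithin_le_nhds).eventually_ne hA1
  have hev2 : ∀ᶠ c in 𝓝[<] (1:ℝ), c ∈ Ioo (0:ℝ) 1 :=
    Ioo_mem_nhdsLT_of_mem (by norm_num : (1:ℝ) ∈ Ioc (0:ℝ) 1)
  have hEq : ∀ c : ℝ, (A c).det ≠ 0 → c ∈ Ioo (0:ℝ) 1 →
      (1 - c) • ((1 : Matrix N N ℝ) - c • P)⁻¹ = E + (1 - c) • ((A c)⁻¹ * (1 - E)) := by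
    intro c hc hc01
    obtain ⟨hc0, hc1⟩ := hc01
    have h1c : (1 : ℝ) - c ≠ 0 := by linarith
    set Bm : Matrix N N ℝ := 1 - c • P with hBm
    have hBdet : Bm.det ≠ 0 := hdetP c hc0.le hc1
    have hBu : IsUnit Bm.det := isUnit_iff_ne_zero.mpr hBdet
    have hAu : IsUnit (A c).det := isUnit_iff_ne_zero.mpr hc
    have f1 : Bm * E = (1 - c) • E := by
      rw [hBm, Matrix.sub_mul, Matrix.one_mul, Matrix.smul_mul, hPE, sub_smul, one_smul]
    have f2 : E * Bm = (1 - c) • E := by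
      rw [hBm, Matrix.mul_sub, Matrix.mul_one, Matrix.mul_smul, hEP, sub_smul, one_smul]
    have g1 : Bm⁻¹ * E = (1 - c)⁻¹ • E := by
      have h : E = (1 - c) • (Bm⁻¹ * E) := by
        calc E = Bm⁻¹ * (Bm * E) := by
              rw [← Matrix.mul_assoc, Matrix.nonsing_inv_mul Bm hBu, Matrix.one_mul]
          _ = (1 - c) • (Bm⁻¹ * E) := by rw [f1, Matrix.mul_smul]
      have h2 := congrArg (fun X => (1 - c)⁻¹ • X) h
      simpa [smul_smul, inv_mul_cancel₀ h1c] using h2.symm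
    have g2 : E * Bm⁻¹ = (1 - c)⁻¹ • E := by
      have h : E = (1 - c) • (E * Bm⁻¹) := by
        calc E = (E * Bm) * Bm⁻¹ := by
              rw [Matrix.mul_assoc, Matrix.mul_nonsing_inv Bm hBu, Matrix.mul_one]
          _ = (1 - c) • (E * Bm⁻¹) := by rw [f2, Matrix.smul_mul]
      have h2 := congrArg (fun X => (1 - c)⁻¹ • X) h
      simpa [smul_smul, inv_mul_cancel₀ h1c] using h2.symm
    have hAB : A c = Bm + c • E := by
      show (1 : Matrix N N ℝ) - c • (P - E) = Bm + c • E
      rw [hBm, smul_sub]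
      abel
    have key : A c * (Bm⁻¹ * (1 - E)) = 1 - E := by
      rw [hAB, Matrix.add_mul, ← Matrix.mul_assoc, Matrix.mul_nonsing_inv Bm hBu,
        Matrix.one_mul, Matrix.smul_mul, ← Matrix.mul_assoc, g2, Matrix.smul_mul,
        Matrix.mul_sub, Matrix.mul_one, hEE, sub_self, smul_zero, smul_zero, add_zero]
    have key2 : Bm⁻¹ * (1 - E) = (A c)⁻¹ * (1 - E) := by
      have h := congrArg (fun X => (A c)⁻¹ * X) key
      simpa only [← Matrix.mul_assoc, Matrix.nonsing_inv_mul (A c) hAu, Matrix.one_mul] using h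
    have split : Bm⁻¹ = Bm⁻¹ * E + Bm⁻¹ * (1 - E) := by
      rw [← Matrix.mul_add]
      simp
    calc (1 - c) • Bm⁻¹ = (1 - c) • (Bm⁻¹ * E) + (1 - c) • (Bm⁻¹ * (1 - E)) := by
          rw [← smul_add, ← split]
      _ = E + (1 - c) • ((A c)⁻¹ * (1 - E)) := by
          rw [g1, key2, smul_smul, mul_inv_cancel₀ h1c, one_smul]
  have hcongr : ∀ᶠ c in 𝓝[<] (1:ℝ),
      E + (1 - c) • ((A c)⁻¹ * (1 - E)) = (1 - c) • ((1 : Matrix N N ℝ) - c • P)⁻¹ := by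
    filter_upwards [hev1, hev2] with c h1 h2
    exact (hEq c h1 h2).symm
  refine Tendsto.congr' hcongr ?_
  have hInv : ContinuousAt (fun c => (A c)⁻¹) 1 := by
    have : (fun c => (A c)⁻¹) = fun c => (Ring.inverse (A c).det) • (A c).adjugate := by
      funext c; rw [Matrix.inv_def]
    rw [this]
    simp only [Ring.inverse_eq_inv']
    exact ((hdetc.continuousAt.inv₀ hA1).smul (hAcont.matrix_adjugate).continuousAt)
  have hmain : ContinuousAt (fun c : ℝ => E + (1 - c) • ((A c)⁻¹ * (1 - E))) 1 :=
    continuousAt_const.add (((continuousAt_const.sub continuousAt_id).smul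
      (hInv.mul continuousAt_const)))
  have := hmain.tendsto.mono_left (nhdsWithin_le_nhds : 𝓝[<] (1:ℝ) ≤ 𝓝 1)
  simpa using this


def pgE (m : ℕ) (a : Fin m → ℕ) (nB : ℕ)
    (μ : ∀ i : Fin m, Fin (a i) → ℝ) (hv : Fin m → Fin nB → ℝ) :
    Matrix ((Σ i : Fin m, Fin (a i)) ⊕ Fin nB) ((Σ i : Fin m, Fin (a i)) ⊕ Fin nB) ℝ :=
  fun s t =>
    match s, t with
    | Sum.inl p, Sum.inl q => if p.1 = q.1 then μ q.1 q.2 else 0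
    | Sum.inr b, Sum.inl q => hv q.1 b * μ q.1 q.2
    | _, Sum.inr _ => 0

@[simp] lemma pgE_ll {m : ℕ} {a : Fin m → ℕ} {nB : ℕ}
    (μ : ∀ i : Fin m, Fin (a i) → ℝ) (hv : Fin m → Fin nB → ℝ)
    (p q : Σ i : Fin m, Fin (a i)) :
    pgE m a nB μ hv (Sum.inl p) (Sum.inl q) = if p.1 = q.1 then μ q.1 q.2 else 0 := rfl

@[simp] lemma pgE_rl {m : ℕ} {a : Fin m → ℕ} {nB : ℕ}
    (μ : ∀ i : Fin m, Fin (a i) → ℝ) (hv : Fin m → Fin nB → ℝ)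
    (b : Fin nB) (q : Σ i : Fin m, Fin (a i)) :
    pgE m a nB μ hv (Sum.inr b) (Sum.inl q) = hv q.1 b * μ q.1 q.2 := rfl

@[simp] lemma pgE_lr {m : ℕ} {a : Fin m → ℕ} {nB : ℕ}
    (μ : ∀ i : Fin m, Fin (a i) → ℝ) (hv : Fin m → Fin nB → ℝ)
    (p : Σ i : Fin m, Fin (a i)) (b : Fin nB) :
    pgE m a nB μ hv (Sum.inl p) (Sum.inr b) = 0 := rfl

@[simp] lemma pgE_rr {m : ℕ} {a : Fin m → ℕ} {nB : ℕ}
    (μ : ∀ i : Fin m, Fin (a i) → ℝ) (hv : Fin m → Fin nB → ℝ)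
    (b b' : Fin nB) :
    pgE m a nB μ hv (Sum.inr b) (Sum.inr b') = 0 := rfl

lemma pg_sumS {m nB : ℕ} {a : Fin m → ℕ} (f : ((Σ i : Fin m, Fin (a i)) ⊕ Fin nB) → ℝ) :
    ∑ s, f s = (∑ i, ∑ x, f (Sum.inl ⟨i, x⟩)) + ∑ b, f (Sum.inr b) := by
  rw [Fintype.sum_sum_type]
  congr 1
  rw [← Finset.univ_sigma_univ, Finset.sum_sigma]

lemma pg_ite_sum {α : Type*} [Fintype α] (c : Prop) [Decidable c] (f : α → ℝ) :
    ∑ z, (if c then f z else 0) = if c then ∑ z, f z else 0 := by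
  split <;> simp

/-- Limit of the PageRank vector as `c → 1⁻` for a stochastic matrix on a state space
`A₁ ⊔ ⋯ ⊔ A_m ⊔ B`, where each `A_i` is a closed class with irreducible restriction `Q_i`
having stationary distribution `μ_i`, and `I - T̃` is invertible for the restriction `T̃`
of `P` to `B`.  The limit vanishes on `B` and equals
`(n_i/n + (n_B/n)·u_B(I - T̃)⁻¹R̃_i1)·μ_i` on each `A_i`. -/
theorem pagerank_limit_c_to_one (m : ℕ) (a : Fin m → ℕ) (ha : ∀ i, 0 < a i)
    (nB : ℕ) (hB : 0 < nB)
    (P : Matrix ((Σ i : Fin m, Fin (a i)) ⊕ Fin nB) ((Σ i : Fin m, Fin (a i)) ⊕ Fin nB) ℝ)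
    (hP0 : ∀ s t, 0 ≤ P s t) (hP1 : ∀ s, ∑ t, P s t = 1)
    (hclosed : ∀ (i : Fin m) (x : Fin (a i)) (t : (Σ i : Fin m, Fin (a i)) ⊕ Fin nB),
      (¬ ∃ y : Fin (a i), t = Sum.inl ⟨i, y⟩) → P (Sum.inl ⟨i, x⟩) t = 0)
    (Q : ∀ i : Fin m, Matrix (Fin (a i)) (Fin (a i)) ℝ)
    (hQ : ∀ i, Q i = P.submatrix (fun x => Sum.inl ⟨i, x⟩) (fun y => Sum.inl ⟨i, y⟩))
    (hirr : ∀ (i : Fin m) (x y : Fin (a i)), ∃ k : ℕ, 0 < (Q i ^ k) x y)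
    (μ : ∀ i : Fin m, Fin (a i) → ℝ)
    (hμ : ∀ i, (μ i) ᵥ* (Q i) = μ i ∧ (∀ x, 0 ≤ μ i x) ∧ ∑ x, μ i x = 1)
    (T : Matrix (Fin nB) (Fin nB) ℝ) (hT : T = P.submatrix Sum.inr Sum.inr)
    (hinv : IsUnit (1 - T))
    (R : ∀ i : Fin m, Matrix (Fin nB) (Fin (a i)) ℝ)
    (hR : ∀ i, R i = P.submatrix Sum.inr (fun x => Sum.inl ⟨i, x⟩))
    (uB : Fin nB → ℝ) (huB : uB = fun _ => (1 : ℝ) / nB)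
    (n : ℕ) (hn : n = (∑ i, a i) + nB)
    (piv : ℝ → ((Σ i : Fin m, Fin (a i)) ⊕ Fin nB) → ℝ)
    (hpiv : ∀ c : ℝ, piv c = fun s => ((1 - c) / n) * ∑ s', (1 - c • P)⁻¹ s' s) :
    Tendsto piv (nhdsWithin 1 (Set.Iio 1))
      (nhds (Sum.elim
        (fun p : Σ i : Fin m, Fin (a i) =>
          ((a p.1 : ℝ) / n +
            ((nB : ℝ) / n) * (uB ⬝ᵥ ((1 - T)⁻¹ *ᵥ ((R p.1) *ᵥ fun _ => (1 : ℝ)))))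
            * μ p.1 p.2)
        (fun _ => 0))) := by
  -- notation
  set hvv : Fin m → Fin nB → ℝ := fun i => (1 - T)⁻¹ *ᵥ (R i *ᵥ fun _ => (1 : ℝ)) with hhvv
  set E := pgE m a nB μ hvv with hE
  -- basic entry facts
  have hPQ : ∀ (i : Fin m) (x y : Fin (a i)),
      P (Sum.inl ⟨i, x⟩) (Sum.inl ⟨i, y⟩) = Q i x y := by
    intro i x y; rw [hQ]; rfl
  have hPll0 : ∀ (i j : Fin m) (x : Fin (a i)) (y : Fin (a j)), i ≠ j →
      P (Sum.inl ⟨i, x⟩) (Sum.inl ⟨j, y⟩) = 0 := by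
    intro i j x y hij
    apply hclosed
    rintro ⟨y', hy'⟩
    injection hy' with h
    exact hij (congrArg Sigma.fst h).symm
  have hPlr : ∀ (i : Fin m) (x : Fin (a i)) (b : Fin nB),
      P (Sum.inl ⟨i, x⟩) (Sum.inr b) = 0 := by
    intro i x b
    apply hclosed
    rintro ⟨y', hy'⟩
    cases hy'
  have hPT : ∀ b b', P (Sum.inr b) (Sum.inr b') = T b b' := by intro b b'; rw [hT]; rfl
  have hPR : ∀ (i : Fin m) (b : Fin nB) (x : Fin (a i)),
      P (Sum.inr b) (Sum.inl ⟨i, x⟩) = R i b x := by intro i b x; rw [hR]; rfl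
  have hQ0 : ∀ (i : Fin m) (x y : Fin (a i)), 0 ≤ Q i x y := by
    intro i x y; rw [hQ]; exact hP0 _ _
  have hQrow : ∀ (i : Fin m) (x : Fin (a i)), ∑ y, Q i x y = 1 := by
    intro i x
    have h := hP1 (Sum.inl ⟨i, x⟩)
    rw [pg_sumS] at h
    have h2 : ∀ b, P (Sum.inl ⟨i, x⟩) (Sum.inr b) = 0 := hPlr i x
    rw [Finset.sum_congr rfl fun b _ => h2 b, Finset.sum_const_zero, add_zero] at h
    rw [Finset.sum_eq_single i (fun j _ hj => ?_) (by simp)] at h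
    · rw [← h]
      exact Finset.sum_congr rfl fun y _ => (hPQ i x y).symm
    · exact Finset.sum_eq_zero fun y _ => hPll0 i j x y (Ne.symm hj)
  have hstat : ∀ (i : Fin m) (y : Fin (a i)), ∑ x, μ i x * Q i x y = μ i y := by
    intro i y
    have := congrFun (hμ i).1 y
    simpa [Matrix.vecMul, dotProduct] using this
  have hmass : ∀ i, ∑ x, μ i x = 1 := fun i => (hμ i).2.2
  have hdetT : IsUnit (1 - T).det := (Matrix.isUnit_iff_isUnit_det _).mp hinv
  have hh : ∀ (i : Fin m) (b : Fin nB),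
      hvv i b = (∑ x, R i b x) + ∑ b', T b b' * hvv i b' := by
    intro i b
    have h1 : (1 - T) *ᵥ hvv i = R i *ᵥ (fun _ => (1 : ℝ)) := by
      rw [hhvv, Matrix.mulVec_mulVec, Matrix.mul_nonsing_inv _ hdetT, Matrix.one_mulVec]
    have h2 := congrFun h1 b
    simp only [Matrix.sub_mulVec, Matrix.one_mulVec, Pi.sub_apply] at h2
    have h3 : (R i *ᵥ fun _ => (1:ℝ)) b = ∑ x, R i b x := by
      simp [Matrix.mulVec, dotProduct]
    have h4 : (T *ᵥ hvv i) b = ∑ b', T b b' * hvv i b' := rfl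
    rw [h3, h4] at h2
    linarith
  -- the three identities
  have hPE : P * E = E := by
    ext s t
    rw [Matrix.mul_apply, pg_sumS]
    rcases s with ⟨i, x⟩ | b <;> rcases t with ⟨j, y⟩ | b'
    · simp only [hE, pgE_ll, pgE_rl, mul_ite, mul_zero, pg_ite_sum,
        Finset.sum_ite_eq', Finset.mem_univ, if_true, Finset.sum_const_zero, add_zero]
      have hz2 : ∑ b'', P (Sum.inl ⟨i, x⟩) (Sum.inr b'') * (hvv j b'' * μ j y) = 0 :=
        Finset.sum_eq_zero fun b'' _ => by rw [hPlr, zero_mul]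
      rw [hz2, add_zero]
      by_cases hij : i = j
      · subst hij
        simp only [if_pos rfl]
        calc ∑ z, P (Sum.inl ⟨i, x⟩) (Sum.inl ⟨i, z⟩) * μ i y
            = ∑ z, Q i x z * μ i y := by
              exact Finset.sum_congr rfl fun z _ => by rw [hPQ]
          _ = μ i y := by rw [← Finset.sum_mul, hQrow, one_mul]
      · rw [if_neg hij]
        exact Finset.sum_eq_zero fun z _ => by rw [hPll0 i j x z hij, zero_mul]
    · simp [hE]
    · simp only [hE, pgE_ll, pgE_rl, mul_ite, mul_zero, pg_ite_sum,
        Finset.sum_ite_eq', Finset.mem_univ, if_true, Finset.sum_const_zero, add_zero]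
      calc (∑ z, P (Sum.inr b) (Sum.inl ⟨j, z⟩) * μ j y)
            + ∑ b', P (Sum.inr b) (Sum.inr b') * (hvv j b' * μ j y)
          = (∑ z, R j b z) * μ j y + (∑ b', T b b' * hvv j b') * μ j y := by
            rw [Finset.sum_mul, Finset.sum_mul]
            congr 1
            · exact Finset.sum_congr rfl fun z _ => by rw [hPR]
            · exact Finset.sum_congr rfl fun b'' _ => by rw [hPT, mul_assoc]
        _ = hvv j b * μ j y := by rw [← add_mul, ← hh]
    · simp [hE]
  have hEP : E * P = E := by
    ext s t
    rw [Matrix.mul_apply, pg_sumS]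
    rcases s with ⟨i, x⟩ | b <;> rcases t with ⟨j, y⟩ | b'
    · simp only [hE, pgE_ll, pgE_lr, ite_mul, zero_mul, pg_ite_sum,
        Finset.sum_ite_eq, Finset.mem_univ, if_true, Finset.sum_const_zero, add_zero]
      by_cases hij : i = j
      · subst hij
        simp only [if_pos rfl]
        calc ∑ z, μ i z * P (Sum.inl ⟨i, z⟩) (Sum.inl ⟨i, y⟩)
            = ∑ z, μ i z * Q i z y := by
              exact Finset.sum_congr rfl fun z _ => by rw [hPQ]
          _ = μ i y := hstat i y
      · rw [if_neg hij]
        exact Finset.sum_eq_zero fun z _ => by rw [hPll0 i j z y hij, mul_zero]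
    · simp only [hE, pgE_ll, pgE_lr, ite_mul, zero_mul, pg_ite_sum,
        Finset.sum_ite_eq, Finset.mem_univ, if_true, Finset.sum_const_zero, add_zero]
      exact Finset.sum_eq_zero fun z _ => by rw [hPlr, mul_zero]
    · simp only [hE, pgE_rl, pgE_rr, zero_mul, Finset.sum_const_zero, add_zero]
      rw [Finset.sum_eq_single j (fun k _ hk => ?_) (by simp)]
      · calc ∑ z, hvv j b * μ j z * P (Sum.inl ⟨j, z⟩) (Sum.inl ⟨j, y⟩)
            = ∑ z, hvv j b * (μ j z * Q j z y) := by
              exact Finset.sum_congr rfl fun z _ => by rw [hPQ, mul_assoc]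
          _ = hvv j b * μ j y := by rw [← Finset.mul_sum, hstat]
      · exact Finset.sum_eq_zero fun z _ => by rw [hPll0 k j z y hk, mul_zero]
    · simp only [hE, pgE_rl, pgE_rr, zero_mul, Finset.sum_const_zero, add_zero]
      apply Finset.sum_eq_zero
      intro k _
      exact Finset.sum_eq_zero fun z _ => by rw [hPlr, mul_zero]
  have hEE : E * E = E := by
    ext s t
    rw [Matrix.mul_apply, pg_sumS]
    rcases s with ⟨i, x⟩ | b <;> rcases t with ⟨j, y⟩ | b'
    · simp only [hE, pgE_ll, pgE_rl, pgE_lr, ite_mul, zero_mul, pg_ite_sum,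
        Finset.sum_ite_eq, Finset.mem_univ, if_true, Finset.sum_const_zero, add_zero]
      by_cases hij : i = j
      · subst hij
        simp only [if_pos rfl, mul_ite, mul_zero, pg_ite_sum]
        rw [← Finset.sum_mul, hmass, one_mul]
      · simp [if_neg hij]
    · simp [hE]
    · simp only [hE, pgE_rl, pgE_ll, pgE_rr, zero_mul, mul_ite, mul_zero, pg_ite_sum,
        Finset.sum_const_zero, add_zero]
      rw [Finset.sum_eq_single j (fun k _ hk => ?_) (by simp)]
      · rw [if_pos rfl, ← Finset.sum_mul, ← Finset.mul_sum, hmass, mul_one]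
      · simp [if_neg hk]
    · simp [hE]
  -- invertibility of 1 - (P - E)
  have hdetA : ((1 : Matrix ((Σ i : Fin m, Fin (a i)) ⊕ Fin nB)
      ((Σ i : Fin m, Fin (a i)) ⊕ Fin nB) ℝ) - (P - E)).det ≠ 0 := by
    intro hdet
    obtain ⟨v, hv0, hv⟩ := Matrix.exists_mulVec_eq_zero_iff.mpr hdet
    have hrow : ∀ s, v s - (P *ᵥ v) s + (E *ᵥ v) s = 0 := by
      intro s
      have h := congrFun hv s
      simp only [Matrix.sub_mulVec, Matrix.one_mulVec, Pi.sub_apply, Pi.zero_apply] at h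
      linarith
    set w : ∀ i, Fin (a i) → ℝ := fun i z => v (Sum.inl ⟨i, z⟩) with hw
    set sv : Fin m → ℝ := fun i => ∑ z, μ i z * w i z with hsv
    have hPv_l : ∀ (i : Fin m) (x : Fin (a i)),
        (P *ᵥ v) (Sum.inl ⟨i, x⟩) = ∑ z, Q i x z * w i z := by
      intro i x
      show ∑ t, P (Sum.inl ⟨i, x⟩) t * v t = _
      rw [pg_sumS]
      have hz : ∑ b, P (Sum.inl ⟨i, x⟩) (Sum.inr b) * v (Sum.inr b) = 0 :=
        Finset.sum_eq_zero fun b _ => by rw [hPlr, zero_mul]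
      rw [hz, add_zero]
      rw [Finset.sum_eq_single i (fun k _ hk => ?_) (by simp)]
      · exact Finset.sum_congr rfl fun z _ => by rw [hPQ]
      · exact Finset.sum_eq_zero fun z _ => by rw [hPll0 i k x z (Ne.symm hk), zero_mul]
    have hEv_l : ∀ (i : Fin m) (x : Fin (a i)),
        (E *ᵥ v) (Sum.inl ⟨i, x⟩) = sv i := by
      intro i x
      show ∑ t, E (Sum.inl ⟨i, x⟩) t * v t = _
      rw [pg_sumS]
      simp only [hE, pgE_ll, pgE_lr, ite_mul, zero_mul, pg_ite_sum,
        Finset.sum_ite_eq, Finset.mem_univ, if_true, Finset.sum_const_zero, add_zero]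
      rfl
    have heq1 : ∀ (i : Fin m) (x : Fin (a i)),
        w i x - ∑ z, Q i x z * w i z + sv i = 0 := by
      intro i x
      have := hrow (Sum.inl ⟨i, x⟩)
      rw [hPv_l, hEv_l] at this
      exact this
    have hsi : ∀ i, sv i = 0 := by
      intro i
      have h2 : ∑ x, μ i x * (w i x - (∑ z, Q i x z * w i z) + sv i) = 0 :=
        Finset.sum_eq_zero fun x _ => by rw [heq1, mul_zero]
      have h3 : ∑ x, μ i x * (w i x - (∑ z, Q i x z * w i z) + sv i)
          = sv i - (∑ x, μ i x * ∑ z, Q i x z * w i z) + sv i := by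
        simp only [mul_add, mul_sub, Finset.sum_add_distrib, Finset.sum_sub_distrib,
          ← Finset.sum_mul, hmass, one_mul, hsv]
      have h4 : ∑ x, μ i x * ∑ z, Q i x z * w i z = sv i := by
        calc ∑ x, μ i x * ∑ z, Q i x z * w i z
            = ∑ x, ∑ z, μ i x * Q i x z * w i z := Finset.sum_congr rfl fun x _ => by
              rw [Finset.mul_sum]
              exact Finset.sum_congr rfl fun z _ => by ring
          _ = ∑ z, ∑ x, μ i x * Q i x z * w i z := Finset.sum_comm
          _ = ∑ z, μ i z * w i z := Finset.sum_congr rfl fun z _ => by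
              rw [← Finset.sum_mul, hstat]
          _ = sv i := rfl
      rw [h3, h4] at h2
      linarith
    have hwz : ∀ (i : Fin m) (x : Fin (a i)), w i x = 0 := by
      intro i x
      have hfix : Q i *ᵥ w i = w i := by
        funext z
        have := heq1 i z
        rw [hsi, add_zero, sub_eq_zero] at this
        exact this.symm
      have hconst : ∀ z, w i z = w i x := fun z =>
        pg_harmonic (Q i) (hQ0 i) (hQrow i) (hirr i) (w i) hfix z x
      have : sv i = w i x := by
        rw [hsv]
        calc ∑ z, μ i z * w i z = ∑ z, μ i z * w i x :=
              Finset.sum_congr rfl fun z _ => by rw [hconst z]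
          _ = w i x := by rw [← Finset.sum_mul, hmass, one_mul]
      rw [← this, hsi]
    have hvB : (1 - T) *ᵥ (fun b => v (Sum.inr b)) = 0 := by
      funext b
      have h := hrow (Sum.inr b)
      have hPv_r : (P *ᵥ v) (Sum.inr b) = ∑ b', T b b' * v (Sum.inr b') := by
        show ∑ t, P (Sum.inr b) t * v t = _
        rw [pg_sumS]
        have hfirst : ∀ k : Fin m, ∑ z, P (Sum.inr b) (Sum.inl ⟨k, z⟩) * v (Sum.inl ⟨k, z⟩) = 0 :=
          fun k => Finset.sum_eq_zero fun z _ => by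
            show P (Sum.inr b) (Sum.inl ⟨k, z⟩) * w k z = 0
            rw [hwz, mul_zero]
        rw [Finset.sum_congr rfl fun k _ => hfirst k, Finset.sum_const_zero, zero_add]
        exact Finset.sum_congr rfl fun b' _ => by rw [hPT]
      have hEv_r : (E *ᵥ v) (Sum.inr b) = 0 := by
        show ∑ t, E (Sum.inr b) t * v t = 0
        rw [pg_sumS]
        simp only [hE, pgE_rl, pgE_rr, zero_mul, Finset.sum_const_zero, add_zero]
        apply Finset.sum_eq_zero
        intro k _
        apply Finset.sum_eq_zero
        intro z _
        show hvv k b * μ k z * w k z = 0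
        rw [hwz, mul_zero]
      rw [hPv_r, hEv_r, add_zero] at h
      show ((1 - T) *ᵥ fun b => v (Sum.inr b)) b = 0
      simp only [Matrix.sub_mulVec, Matrix.one_mulVec, Pi.sub_apply]
      have : (T *ᵥ fun b' => v (Sum.inr b')) b = ∑ b', T b b' * v (Sum.inr b') := rfl
      rw [this]
      linarith
    have hvBz : ∀ b, v (Sum.inr b) = 0 := by
      intro b
      have h := congrArg (fun u => ((1 - T)⁻¹ *ᵥ u) b) hvB
      simp only [Matrix.mulVec_mulVec, Matrix.nonsing_inv_mul _ hdetT, Matrix.one_mulVec,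
        Matrix.mulVec_zero, Pi.zero_apply] at h
      exact h
    apply hv0
    funext s
    rcases s with ⟨i, x⟩ | b
    · exact hwz i x
    · exact hvBz b
  -- the limit of (1-c) • (1 - c•P)⁻¹
  have hlim : Tendsto (fun c : ℝ => (1 - c) • ((1 : Matrix ((Σ i : Fin m, Fin (a i)) ⊕ Fin nB)
      ((Σ i : Fin m, Fin (a i)) ⊕ Fin nB) ℝ) - c • P)⁻¹) (𝓝[<] (1:ℝ)) (𝓝 E) :=
    pg_abel_limit P E hPE hEP hEE (fun c h0 h1 => pg_det_ne_zero P hP0 hP1 h0 h1) hdetA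
  -- assemble
  have hcomp : piv = (fun M : Matrix ((Σ i : Fin m, Fin (a i)) ⊕ Fin nB)
        ((Σ i : Fin m, Fin (a i)) ⊕ Fin nB) ℝ => fun s => (1 / (n:ℝ)) * ∑ s', M s' s)
      ∘ (fun c : ℝ => (1 - c) • ((1 : Matrix ((Σ i : Fin m, Fin (a i)) ⊕ Fin nB)
        ((Σ i : Fin m, Fin (a i)) ⊕ Fin nB) ℝ) - c • P)⁻¹) := by
    funext c
    rw [hpiv]
    funext s
    simp only [Function.comp_apply, Matrix.smul_apply, smul_eq_mul, ← Finset.mul_sum]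
    ring
  have hFcont : Continuous (fun M : Matrix ((Σ i : Fin m, Fin (a i)) ⊕ Fin nB)
      ((Σ i : Fin m, Fin (a i)) ⊕ Fin nB) ℝ => fun s => (1 / (n:ℝ)) * ∑ s', M s' s) := by
    apply continuous_pi
    intro s
    apply continuous_const.mul
    apply continuous_finset_sum
    intro s' _
    exact ((continuous_apply s).comp (continuous_apply s'))
  have hfinal := (hFcont.tendsto E).comp hlim
  rw [hcomp]
  convert hfinal using 2
  funext s
  rcases s with ⟨i, y⟩ | b
  · show ((a i : ℝ) / n + ((nB : ℝ) / n) * (uB ⬝ᵥ hvv i)) * μ i y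
      = (1 / (n:ℝ)) * ∑ s', E s' (Sum.inl ⟨i, y⟩)
    rw [pg_sumS]
    simp only [hE, pgE_ll, pgE_rl]
    have h1 : ∑ k, ∑ _z : Fin (a k), (if k = i then μ i y else 0) = (a i : ℝ) * μ i y := by
      rw [Finset.sum_eq_single i (fun k _ hk => ?_) (by simp)]
      · rw [if_pos rfl, Finset.sum_const, Finset.card_univ, Fintype.card_fin, nsmul_eq_mul]
      · rw [if_neg hk, Finset.sum_const_zero]
    have h2 : ∑ b, hvv i b * μ i y = (∑ b, hvv i b) * μ i y := by rw [Finset.sum_mul]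
    rw [h1, h2]
    have h3 : uB ⬝ᵥ hvv i = (1 / (nB:ℝ)) * ∑ b, hvv i b := by
      rw [huB, dotProduct, Finset.mul_sum]
    rw [h3]
    have hnB : (nB : ℝ) ≠ 0 := Nat.cast_ne_zero.mpr hB.ne'
    have hn0 : (n : ℝ) ≠ 0 := by
      have h5 : 0 < n := by rw [hn]; exact Nat.lt_of_lt_of_le hB (Nat.le_add_left _ _)
      exact Nat.cast_ne_zero.mpr h5.ne'
    field_simp
  · show (0 : ℝ) = (1 / (n:ℝ)) * ∑ s', E s' (Sum.inr b)
    rw [pg_sumS]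
    simp [hE]
end

section
/- As ε → 0 from above, π(ε) converges; its limit is the row vector equal to ν_i·μ_i on each closed class A_i and equal to 0 on B, where ν = (ν₁,…,ν_m) is the unique probability row vector satisfying ν(I_m + D) = ν with aggregated generator D := MCQ̂. -/
open Matrix Filter Set Topology

private lemma vecMul_smulMat {k l : Type*} [Fintype k] (v : k → ℝ) (e : ℝ) (A : Matrix k l ℝ) :
    v ᵥ* (e • A) = e • (v ᵥ* A) := by
  ext c
  simp [Matrix.vecMul, dotProduct, Finset.mul_sum]
  exact Finset.sum_congr rfl fun t _ => by ring

private lemma pow_entry_nonneg {k : ℕ} (Q : Matrix (Fin k) (Fin k) ℝ)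
    (h : ∀ x y, 0 ≤ Q x y) : ∀ (n : ℕ) (x y : Fin k), 0 ≤ (Q ^ n) x y := by
  intro n
  induction n with
  | zero =>
    intro x y
    simp only [pow_zero, Matrix.one_apply]
    split <;> norm_num
  | succ n ih =>
    intro x y
    rw [pow_succ, Matrix.mul_apply]
    exact Finset.sum_nonneg fun z _ => mul_nonneg (ih x z) (h z y)

private lemma vecMul_pow_fixed {k : ℕ} (Q : Matrix (Fin k) (Fin k) ℝ) (v : Fin k → ℝ)
    (h : v ᵥ* Q = v) : ∀ n : ℕ, v ᵥ* (Q ^ n) = v := by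
  intro n
  induction n with
  | zero => simp
  | succ n ih => rw [pow_succ, ← Matrix.vecMul_vecMul, ih, h]

private lemma pos_propagate {k : ℕ} (Q : Matrix (Fin k) (Fin k) ℝ)
    (hQ0 : ∀ x y, 0 ≤ Q x y) (v : Fin k → ℝ) (hv0 : ∀ x, 0 ≤ v x)
    (hv : v ᵥ* Q = v) {x y : Fin k} (hx : 0 < v x) (n : ℕ) (hn : 0 < (Q ^ n) x y) :
    0 < v y := by
  have h1 : v y = ∑ z, v z * (Q ^ n) z y := by
    conv_lhs => rw [← vecMul_pow_fixed Q v hv n]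
    simp [Matrix.vecMul, dotProduct]
  have h2 : v x * (Q ^ n) x y ≤ ∑ z, v z * (Q ^ n) z y :=
    Finset.single_le_sum (fun z _ => mul_nonneg (hv0 z) (pow_entry_nonneg Q hQ0 n z y))
      (Finset.mem_univ x)
  have h3 : 0 < v x * (Q ^ n) x y := mul_pos hx hn
  rw [h1]; linarith

private lemma stationary_unique {k : ℕ} (Q : Matrix (Fin k) (Fin k) ℝ)
    (hQ0 : ∀ x y, 0 ≤ Q x y) (hirr : ∀ x y, ∃ n : ℕ, 0 < (Q ^ n) x y)
    (μ : Fin k → ℝ) (hμQ : μ ᵥ* Q = μ) (hμ0 : ∀ x, 0 ≤ μ x) (hμ1 : ∑ x, μ x = 1)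
    (ρ : Fin k → ℝ) (hρQ : ρ ᵥ* Q = ρ) (hρ0 : ∀ x, 0 ≤ ρ x) :
    ρ = (∑ x, ρ x) • μ := by
  have hμpos : ∀ x, 0 < μ x := by
    obtain ⟨x, hx⟩ : ∃ x, 0 < μ x := by
      by_contra h
      push_neg at h
      have h0 : ∑ x, μ x = 0 :=
        le_antisymm (Finset.sum_nonpos fun x _ => h x) (Finset.sum_nonneg fun x _ => hμ0 x)
      rw [hμ1] at h0; norm_num at h0
    intro y
    obtain ⟨n, hn⟩ := hirr x y
    exact pos_propagate Q hQ0 μ hμ0 hμQ hx n hn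
  have hk : Nonempty (Fin k) := by
    by_contra h
    rw [not_nonempty_iff] at h
    rw [Finset.univ_eq_empty, Finset.sum_empty] at hμ1
    norm_num at hμ1
  obtain ⟨x0, -, hx0⟩ := Finset.exists_min_image Finset.univ (fun x => ρ x / μ x)
    ⟨hk.some, Finset.mem_univ _⟩
  set c := ρ x0 / μ x0 with hc
  set w : Fin k → ℝ := ρ - c • μ with hwdef
  have hw0 : ∀ x, 0 ≤ w x := by
    intro x
    have h1 : c ≤ ρ x / μ x := hx0 x (Finset.mem_univ x)
    have h2 : c * μ x ≤ ρ x := (le_div_iff₀ (hμpos x)).1 h1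
    simp [hwdef]
    linarith
  have hwQ : w ᵥ* Q = w := by
    rw [hwdef, Matrix.sub_vecMul, Matrix.smul_vecMul, hρQ, hμQ]
  have hwx0 : w x0 = 0 := by
    have := (hμpos x0).ne'
    simp [hwdef, hc]
    field_simp
    ring
  have hwzero : ∀ y, w y = 0 := by
    intro y
    obtain ⟨n, hn⟩ := hirr y x0
    have hsum : ∑ z, w z * (Q ^ n) z x0 = 0 := by
      have h2 : (w ᵥ* Q ^ n) x0 = w x0 := by rw [vecMul_pow_fixed Q w hwQ n]
      simpa [Matrix.vecMul, dotProduct, hwx0] using h2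
    have hterm : ∀ z ∈ Finset.univ, 0 ≤ w z * (Q ^ n) z x0 :=
      fun z _ => mul_nonneg (hw0 z) (pow_entry_nonneg Q hQ0 n z x0)
    have h3 := (Finset.sum_eq_zero_iff_of_nonneg hterm).1 hsum y (Finset.mem_univ y)
    rcases mul_eq_zero.1 h3 with h | h
    · exact h
    · exact absurd h (ne_of_gt hn)
  have hρeq : ∀ x, ρ x = c * μ x := by
    intro x
    have := hwzero x
    simp [hwdef] at this
    linarith
  have hsumρ : ∑ x, ρ x = c := by
    rw [Finset.sum_congr rfl fun x _ => hρeq x, ← Finset.mul_sum, hμ1, mul_one]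
  funext x
  rw [Pi.smul_apply, smul_eq_mul, hsumρ, hρeq x]

private lemma sum_split {m : ℕ} {a : Fin m → ℕ} {nB : ℕ}
    (f : ((Σ i : Fin m, Fin (a i)) ⊕ Fin nB) → ℝ) :
    ∑ s, f s = (∑ j, ∑ x, f (Sum.inl ⟨j, x⟩)) + ∑ z, f (Sum.inr z) := by
  rw [Fintype.sum_sum_type, ← Finset.univ_sigma_univ, Finset.sum_sigma]

/-- Singular perturbation lemma: for a singularly perturbed Markov chain
`G(ε) = P + εC` whose unperturbed chain has closed classes `A₁,…,A_m` (with irreducible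
restrictions `Q_i` and stationary distributions `μ_i`) and transient states `B`,
the stationary distribution `π(ε)` converges as `ε → 0⁺` to the vector equal to `ν_i·μ_i`
on each `A_i` and `0` on `B`, where `ν` is the unique probability row vector satisfying
`ν(I_m + D) = ν` with the aggregated generator `D = MCQ̂`. -/
theorem singular_perturbation_limit (m : ℕ) (a : Fin m → ℕ) (ha : ∀ i, 0 < a i)
    (nB : ℕ) (hB : 0 < nB)
    (P C : Matrix ((Σ i : Fin m, Fin (a i)) ⊕ Fin nB) ((Σ i : Fin m, Fin (a i)) ⊕ Fin nB) ℝ)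
    (hP0 : ∀ s t, 0 ≤ P s t) (hP1 : ∀ s, ∑ t, P s t = 1)
    (hclosed : ∀ (i : Fin m) (x : Fin (a i)) (t : (Σ i : Fin m, Fin (a i)) ⊕ Fin nB),
      (¬ ∃ y : Fin (a i), t = Sum.inl ⟨i, y⟩) → P (Sum.inl ⟨i, x⟩) t = 0)
    (Q : ∀ i : Fin m, Matrix (Fin (a i)) (Fin (a i)) ℝ)
    (hQ : ∀ i, Q i = P.submatrix (fun x => Sum.inl ⟨i, x⟩) (fun y => Sum.inl ⟨i, y⟩))
    (hirr : ∀ (i : Fin m) (x y : Fin (a i)), ∃ k : ℕ, 0 < (Q i ^ k) x y)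
    (μ : ∀ i : Fin m, Fin (a i) → ℝ)
    (hμ : ∀ i, (μ i) ᵥ* (Q i) = μ i ∧ (∀ x, 0 ≤ μ i x) ∧ ∑ x, μ i x = 1)
    (T : Matrix (Fin nB) (Fin nB) ℝ) (hT : T = P.submatrix Sum.inr Sum.inr)
    (hinv : IsUnit (1 - T))
    (R : ∀ i : Fin m, Matrix (Fin nB) (Fin (a i)) ℝ)
    (hR : ∀ i, R i = P.submatrix Sum.inr (fun x => Sum.inl ⟨i, x⟩))
    (ε₀ : ℝ) (hε₀ : 0 < ε₀)
    (hstoch : ∀ ε ∈ Set.Ioo 0 ε₀, (∀ s t, 0 ≤ (P + ε • C) s t) ∧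
      (∀ s, ∑ t, (P + ε • C) s t = 1))
    (piv : ℝ → ((Σ i : Fin m, Fin (a i)) ⊕ Fin nB) → ℝ)
    (hpiv : ∀ ε ∈ Set.Ioo 0 ε₀,
      (piv ε) ᵥ* (P + ε • C) = piv ε ∧ (∀ s, 0 ≤ piv ε s) ∧ ∑ s, piv ε s = 1 ∧
        ∀ ρ : ((Σ i : Fin m, Fin (a i)) ⊕ Fin nB) → ℝ,
          ρ ᵥ* (P + ε • C) = ρ → (∀ s, 0 ≤ ρ s) → ∑ s, ρ s = 1 → ρ = piv ε)
    (M : Matrix (Fin m) ((Σ i : Fin m, Fin (a i)) ⊕ Fin nB) ℝ)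
    (hM : ∀ (i j : Fin m) (x : Fin (a j)),
      M i (Sum.inl ⟨j, x⟩) = if j = i then μ j x else 0)
    (hM' : ∀ (i : Fin m) (y : Fin nB), M i (Sum.inr y) = 0)
    (Qhat : Matrix ((Σ i : Fin m, Fin (a i)) ⊕ Fin nB) (Fin m) ℝ)
    (hQhat : ∀ (i j : Fin m) (x : Fin (a j)),
      Qhat (Sum.inl ⟨j, x⟩) i = if j = i then 1 else 0)
    (hQhat' : ∀ (i : Fin m) (y : Fin nB),
      Qhat (Sum.inr y) i = ((1 - T)⁻¹ *ᵥ ((R i) *ᵥ fun _ => (1 : ℝ))) y)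
    (D : Matrix (Fin m) (Fin m) ℝ) (hD : D = M * C * Qhat)
    (ν : Fin m → ℝ)
    (hν : ν ᵥ* (1 + D) = ν ∧ (∀ i, 0 ≤ ν i) ∧ ∑ i, ν i = 1)
    (hνuniq : ∀ ρ : Fin m → ℝ,
      ρ ᵥ* (1 + D) = ρ → (∀ i, 0 ≤ ρ i) → ∑ i, ρ i = 1 → ρ = ν) :
    Tendsto piv (nhdsWithin 0 (Set.Ioi 0))
      (nhds (Sum.elim
        (fun p : Σ i : Fin m, Fin (a i) => ν p.1 * μ p.1 p.2)
        (fun _ => 0))) := by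
  classical
  set L : ((Σ i : Fin m, Fin (a i)) ⊕ Fin nB) → ℝ := Sum.elim
      (fun p : Σ i : Fin m, Fin (a i) => ν p.1 * μ p.1 p.2) (fun _ => 0) with hL
  -- helper: class-disjointness
  have hne_mem : ∀ (j j' : Fin m) (x' : Fin (a j')), j' ≠ j →
      ¬∃ y : Fin (a j), (Sum.inl ⟨j', x'⟩ : (Σ i : Fin m, Fin (a i)) ⊕ Fin nB) = Sum.inl ⟨j, y⟩ := by
    rintro j j' x' hne ⟨y, h⟩
    exact hne (congrArg Sigma.fst (Sum.inl.inj h))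
  have hnotB : ∀ (j : Fin m) (y : Fin nB),
      ¬∃ y' : Fin (a j), (Sum.inr y : (Σ i : Fin m, Fin (a i)) ⊕ Fin nB) = Sum.inl ⟨j, y'⟩ := by
    rintro j y ⟨y', h⟩
    cases h
  -- row sums within a class
  have hrow : ∀ (j : Fin m) (x : Fin (a j)),
      ∑ x', P (Sum.inl ⟨j, x⟩) (Sum.inl ⟨j, x'⟩) = 1 := by
    intro j x
    have h1 := hP1 (Sum.inl ⟨j, x⟩)
    rw [sum_split] at h1
    have h2 : ∑ z, P (Sum.inl ⟨j, x⟩) (Sum.inr z) = 0 :=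
      Finset.sum_eq_zero fun z _ => hclosed j x (Sum.inr z) (hnotB j z)
    have h3 : ∀ j' ∈ Finset.univ, j' ≠ j →
        ∑ x', P (Sum.inl ⟨j, x⟩) (Sum.inl ⟨j', x'⟩) = 0 := by
      intro j' _ hne
      exact Finset.sum_eq_zero fun x' _ => hclosed j x _ (hne_mem j j' x' hne)
    rw [Finset.sum_eq_single j h3 (by intro h; exact absurd (Finset.mem_univ j) h)] at h1
    linarith
  have hdet : IsUnit (1 - T).det := (Matrix.isUnit_iff_isUnit_det _).1 hinv
  have hphi : ∀ i : Fin m,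
      ((R i) *ᵥ fun _ => (1:ℝ)) + T *ᵥ ((1 - T)⁻¹ *ᵥ ((R i) *ᵥ fun _ => (1:ℝ)))
        = (1 - T)⁻¹ *ᵥ ((R i) *ᵥ fun _ => (1:ℝ)) := by
    intro i
    have h1 : (1 - T) *ᵥ ((1 - T)⁻¹ *ᵥ ((R i) *ᵥ fun _ => (1:ℝ)))
        = (R i) *ᵥ fun _ => (1:ℝ) := by
      rw [Matrix.mulVec_mulVec, Matrix.mul_nonsing_inv _ hdet, Matrix.one_mulVec]
    rw [Matrix.sub_mulVec, Matrix.one_mulVec] at h1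
    funext y
    have := congrFun h1 y
    simp only [Pi.add_apply, Pi.sub_apply] at this ⊢
    linarith
  have hPQhat : P * Qhat = Qhat := by
    ext s i
    rw [Matrix.mul_apply, sum_split]
    cases s with
    | inl p =>
      obtain ⟨j, x⟩ := p
      have h2 : ∑ z, P (Sum.inl ⟨j, x⟩) (Sum.inr z) * Qhat (Sum.inr z) i = 0 :=
        Finset.sum_eq_zero fun z _ => by
          rw [hclosed j x (Sum.inr z) (hnotB j z), zero_mul]
      have h3 : ∀ j' ∈ Finset.univ, j' ≠ j →
          ∑ x', P (Sum.inl ⟨j, x⟩) (Sum.inl ⟨j', x'⟩) * Qhat (Sum.inl ⟨j', x'⟩) i = 0 := by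
        intro j' _ hne
        exact Finset.sum_eq_zero fun x' _ => by
          rw [hclosed j x _ (hne_mem j j' x' hne), zero_mul]
      rw [Finset.sum_eq_single j h3 (by intro h; exact absurd (Finset.mem_univ j) h), h2,
        add_zero]
      have h4 : ∀ x', Qhat (Sum.inl ⟨j, x'⟩) i = if j = i then 1 else 0 :=
        fun x' => hQhat i j x'
      simp only [h4]
      by_cases hji : j = i
      · simp only [if_pos hji, mul_one]
        exact hrow j x
      · simp [hji]
    | inr y =>
      have h1 : ∀ j' ∈ Finset.univ, j' ≠ i →
          ∑ x', P (Sum.inr y) (Sum.inl ⟨j', x'⟩) * Qhat (Sum.inl ⟨j', x'⟩) i = 0 := by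
        intro j' _ hne
        exact Finset.sum_eq_zero fun x' _ => by rw [hQhat i j' x', if_neg hne, mul_zero]
      rw [Finset.sum_eq_single i h1 (by intro h; exact absurd (Finset.mem_univ i) h)]
      have h2 : ∑ x', P (Sum.inr y) (Sum.inl ⟨i, x'⟩) * Qhat (Sum.inl ⟨i, x'⟩) i
          = ((R i) *ᵥ fun _ => (1:ℝ)) y := by
        rw [Matrix.mulVec]
        simp only [dotProduct, hR, Matrix.submatrix_apply]
        exact Finset.sum_congr rfl fun x' _ => by simp [hQhat i i x']
      have h3 : ∑ z, P (Sum.inr y) (Sum.inr z) * Qhat (Sum.inr z) i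
          = (T *ᵥ ((1 - T)⁻¹ *ᵥ ((R i) *ᵥ fun _ => (1:ℝ)))) y := by
        rw [Matrix.mulVec]
        simp only [dotProduct]
        refine Finset.sum_congr rfl fun z _ => ?_
        rw [hQhat' i z]
        congr 1
        rw [hT]; rfl
      rw [h2, h3, hQhat' i y]
      exact congrFun (hphi i) y
  -- perturbed stationary vectors kill C * Qhat
  have hCQ : ∀ ε ∈ Set.Ioo (0:ℝ) ε₀, piv ε ᵥ* (C * Qhat) = 0 := by
    intro ε hε
    have hst := (hpiv ε hε).1
    have h1 : piv ε ᵥ* Qhat + ε • (piv ε ᵥ* (C * Qhat)) = piv ε ᵥ* Qhat := by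
      have h0 : piv ε ᵥ* ((P + ε • C) * Qhat) = piv ε ᵥ* Qhat := by
        rw [← Matrix.vecMul_vecMul, hst]
      rwa [Matrix.add_mul, Matrix.smul_mul, Matrix.vecMul_add, hPQhat, vecMul_smulMat] at h0
    have h2 : ε • (piv ε ᵥ* (C * Qhat)) = 0 := by
      have := add_eq_left.1 h1
      exact this
    rcases smul_eq_zero.1 h2 with h | h
    · exact absurd h (ne_of_gt hε.1)
    · exact h
  -- characterization of the limit
  have hchar : ∀ π₀ : ((Σ i : Fin m, Fin (a i)) ⊕ Fin nB) → ℝ,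
      π₀ ᵥ* P = π₀ → (∀ s, 0 ≤ π₀ s) → ∑ s, π₀ s = 1 →
      π₀ ᵥ* (C * Qhat) = 0 → π₀ = L := by
    intro π₀ hstat h0 h1 hCQ0
    have hvapp : ∀ s, (π₀ ᵥ* P) s = ∑ t, π₀ t * P t s := by
      intro s; simp [Matrix.vecMul, dotProduct]
    -- transient part vanishes
    have hbT : ∀ y, π₀ (Sum.inr y) = ∑ z, π₀ (Sum.inr z) * T z y := by
      intro y
      have h := congrFun hstat (Sum.inr y)
      rw [hvapp, sum_split (fun t => π₀ t * P t (Sum.inr y))] at h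
      have hz : ∑ j, ∑ x, π₀ (Sum.inl ⟨j, x⟩) * P (Sum.inl ⟨j, x⟩) (Sum.inr y) = 0 :=
        Finset.sum_eq_zero fun j _ => Finset.sum_eq_zero fun x _ => by
          rw [hclosed j x (Sum.inr y) (hnotB j y), mul_zero]
      rw [hz, zero_add] at h
      rw [← h]
      exact Finset.sum_congr rfl fun z _ => by rw [hT]; rfl
    have hb0 : ∀ y, π₀ (Sum.inr y) = 0 := by
      have hinj := Matrix.vecMul_injective_iff_isUnit.2 hinv
      have hz : (fun y => π₀ (Sum.inr y)) ᵥ* (1 - T) = (0 : Fin nB → ℝ) ᵥ* (1 - T) := by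
        rw [Matrix.vecMul_sub, Matrix.vecMul_one, Matrix.zero_vecMul]
        funext y
        have hTy : ((fun z => π₀ (Sum.inr z)) ᵥ* T) y = ∑ z, π₀ (Sum.inr z) * T z y := by
          simp [Matrix.vecMul, dotProduct]
        simp only [Pi.sub_apply, Pi.zero_apply]
        rw [hTy, ← hbT y, sub_self]
      intro y
      exact congrFun (hinj hz) y
    -- stationarity on each class
    have hclass : ∀ i : Fin m,
        (fun x => π₀ (Sum.inl ⟨i, x⟩)) ᵥ* (Q i) = fun x => π₀ (Sum.inl ⟨i, x⟩) := by
      intro i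
      funext y
      have h := congrFun hstat (Sum.inl ⟨i, y⟩)
      rw [hvapp, sum_split (fun t => π₀ t * P t (Sum.inl ⟨i, y⟩))] at h
      have hz : ∑ z, π₀ (Sum.inr z) * P (Sum.inr z) (Sum.inl ⟨i, y⟩) = 0 :=
        Finset.sum_eq_zero fun z _ => by rw [hb0 z, zero_mul]
      have hz2 : ∀ j ∈ Finset.univ, j ≠ i →
          ∑ x, π₀ (Sum.inl ⟨j, x⟩) * P (Sum.inl ⟨j, x⟩) (Sum.inl ⟨i, y⟩) = 0 :=
        fun j _ hne => Finset.sum_eq_zero fun x _ => by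
          rw [hclosed j x _ (hne_mem j i y (Ne.symm hne)), mul_zero]
      rw [Finset.sum_eq_single i hz2 (by intro h'; exact absurd (Finset.mem_univ i) h'), hz,
        add_zero] at h
      have hQy : ((fun x => π₀ (Sum.inl ⟨i, x⟩)) ᵥ* Q i) y
          = ∑ x, π₀ (Sum.inl ⟨i, x⟩) * P (Sum.inl ⟨i, x⟩) (Sum.inl ⟨i, y⟩) := by
        simp [Matrix.vecMul, dotProduct, hQ]
      rw [hQy, h]
    have hQ0 : ∀ (i : Fin m) (x y : Fin (a i)), 0 ≤ Q i x y := fun i x y => by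
      rw [hQ]; exact hP0 _ _
    set c : Fin m → ℝ := fun i => ∑ x, π₀ (Sum.inl ⟨i, x⟩) with hcdef
    have hρ : ∀ i, (fun x => π₀ (Sum.inl ⟨i, x⟩)) = c i • μ i := fun i =>
      stationary_unique (Q i) (hQ0 i) (hirr i) (μ i) (hμ i).1 (hμ i).2.1 (hμ i).2.2
        _ (hclass i) (fun x => h0 _)
    have hsc : ∑ i, c i = 1 := by
      rw [sum_split π₀] at h1
      have hz : ∑ z, π₀ (Sum.inr z) = 0 := Finset.sum_eq_zero fun z _ => hb0 z
      rw [hz, add_zero] at h1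
      exact h1
    -- rows of M
    have hwM : ∀ (w : Fin m → ℝ) (j : Fin m) (x : Fin (a j)),
        (w ᵥ* M) (Sum.inl ⟨j, x⟩) = w j * μ j x := by
      intro w j x
      have happ : (w ᵥ* M) (Sum.inl ⟨j, x⟩) = ∑ i, w i * M i (Sum.inl ⟨j, x⟩) := by
        simp [Matrix.vecMul, dotProduct]
      have h2 : ∀ i, w i * M i (Sum.inl ⟨j, x⟩) = if j = i then w i * μ j x else 0 := by
        intro i
        rw [hM i j x]
        split <;> simp
      rw [happ, Finset.sum_congr rfl fun i _ => h2 i, Finset.sum_ite_eq]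
      simp
    have hwM' : ∀ (w : Fin m → ℝ) (y : Fin nB), (w ᵥ* M) (Sum.inr y) = 0 := by
      intro w y
      have happ : (w ᵥ* M) (Sum.inr y) = ∑ i, w i * M i (Sum.inr y) := by
        simp [Matrix.vecMul, dotProduct]
      rw [happ]
      exact Finset.sum_eq_zero fun i _ => by rw [hM' i y, mul_zero]
    have hcM : c ᵥ* M = π₀ := by
      funext s
      cases s with
      | inl p =>
        obtain ⟨j, x⟩ := p
        rw [hwM]
        exact (congrFun (hρ j) x).symm
      | inr y =>
        rw [hwM']
        exact (hb0 y).symm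
    have hcD : c ᵥ* (1 + D) = c := by
      rw [Matrix.vecMul_add, Matrix.vecMul_one, hD, Matrix.mul_assoc, ← Matrix.vecMul_vecMul,
        hcM, hCQ0, add_zero]
    have hc0 : ∀ i, 0 ≤ c i := fun i => Finset.sum_nonneg fun x _ => h0 _
    have hcν := hνuniq c hcD hc0 hsc
    rw [← hcM, hcν]
    funext s
    cases s with
    | inl p =>
      obtain ⟨j, x⟩ := p
      rw [hwM]
      simp [hL]
    | inr y =>
      rw [hwM']
      simp [hL]
  -- compactness of the simplex
  set K : Set (((Σ i : Fin m, Fin (a i)) ⊕ Fin nB) → ℝ) :=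
    {v | ∀ s, 0 ≤ v s} ∩ {v | ∑ s, v s = 1} with hK
  have hKclosed : IsClosed K := by
    apply IsClosed.inter
    · have heq : {v : ((Σ i : Fin m, Fin (a i)) ⊕ Fin nB) → ℝ | ∀ s, 0 ≤ v s}
          = ⋂ s, {v | 0 ≤ v s} := by
        ext v; simp [Set.mem_iInter]
      rw [heq]
      exact isClosed_iInter fun s => isClosed_le continuous_const (continuous_apply s)
    · exact isClosed_eq (continuous_finset_sum _ fun s _ => continuous_apply s) continuous_const
  have hsub : K ⊆ Set.pi Set.univ (fun _ => Set.Icc (0:ℝ) 1) := by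
    rintro v ⟨hv0, hv1⟩ s -
    refine ⟨hv0 s, ?_⟩
    calc v s ≤ ∑ t, v t := Finset.single_le_sum (fun t _ => hv0 t) (Finset.mem_univ s)
    _ = 1 := hv1
  have hKcomp : IsCompact K :=
    (isCompact_univ_pi fun _ => isCompact_Icc).of_isClosed_subset hKclosed hsub
  -- subsequence argument
  apply tendsto_of_subseq_tendsto
  intro ns hns
  have hmem : ∀ᶠ n in atTop, ns n ∈ Set.Ioo (0:ℝ) ε₀ :=
    hns.eventually (Ioo_mem_nhdsGT_of_mem ⟨le_refl 0, hε₀⟩)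
  obtain ⟨N, hN⟩ := Filter.eventually_atTop.1 hmem
  have hy : ∀ n : ℕ, piv (ns (n + N)) ∈ K := by
    intro n
    obtain ⟨-, h0, h1, -⟩ := hpiv _ (hN (n + N) (Nat.le_add_left N n))
    exact ⟨h0, h1⟩
  obtain ⟨π₀, hπK, φ, hφmono, hφtend⟩ := hKcomp.tendsto_subseq hy
  have hεmem : ∀ n : ℕ, ns (φ n + N) ∈ Set.Ioo (0:ℝ) ε₀ := fun n => hN _ (Nat.le_add_left N _)
  have hφatTop : Tendsto (fun n => φ n + N) atTop atTop :=
    tendsto_atTop_mono (fun n => le_trans hφmono.le_apply (Nat.le_add_right _ _)) tendsto_id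
  have hεto0 : Tendsto (fun n => ns (φ n + N)) atTop (𝓝 0) :=
    (hns.mono_right nhdsWithin_le_nhds).comp hφatTop
  have hconv : Tendsto (fun n => piv (ns (φ n + N))) atTop (𝓝 π₀) := hφtend
  have hcoord : ∀ s, Tendsto (fun n => piv (ns (φ n + N)) s) atTop (𝓝 (π₀ s)) :=
    fun s => (tendsto_pi_nhds.1 hconv) s
  have hstat : π₀ ᵥ* P = π₀ := by
    funext s
    have hA : Tendsto (fun n => ∑ t, piv (ns (φ n + N)) t * P t s) atTop
        (𝓝 (∑ t, π₀ t * P t s)) :=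
      tendsto_finset_sum _ fun t _ => (hcoord t).mul_const _
    have hBt : Tendsto (fun n => ns (φ n + N) * ∑ t, piv (ns (φ n + N)) t * C t s) atTop
        (𝓝 (0 * ∑ t, π₀ t * C t s)) :=
      hεto0.mul (tendsto_finset_sum _ fun t _ => (hcoord t).mul_const _)
    have heq : ∀ n : ℕ, piv (ns (φ n + N)) s
        = (∑ t, piv (ns (φ n + N)) t * P t s)
          + ns (φ n + N) * ∑ t, piv (ns (φ n + N)) t * C t s := by
      intro n
      have h := congrFun (hpiv _ (hεmem n)).1 s
      simp only [Matrix.vecMul, dotProduct, Matrix.add_apply, Matrix.smul_apply,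
        smul_eq_mul] at h
      rw [← h, Finset.mul_sum, ← Finset.sum_add_distrib]
      exact Finset.sum_congr rfl fun t _ => by ring
    have hlim : Tendsto (fun n => piv (ns (φ n + N)) s) atTop
        (𝓝 (∑ t, π₀ t * P t s + 0 * ∑ t, π₀ t * C t s)) := by
      have h3 := hA.add hBt
      have h4 : (fun n => (∑ t, piv (ns (φ n + N)) t * P t s)
          + ns (φ n + N) * ∑ t, piv (ns (φ n + N)) t * C t s)
          = fun n => piv (ns (φ n + N)) s := by
        funext n; exact (heq n).symm
      rwa [h4] at h3
    have h2 := tendsto_nhds_unique (hcoord s) hlim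
    have h5 : (π₀ ᵥ* P) s = ∑ t, π₀ t * P t s := by
      simp [Matrix.vecMul, dotProduct]
    rw [h5, h2]; ring
  have hCQ0 : π₀ ᵥ* (C * Qhat) = 0 := by
    funext i
    have hA : Tendsto (fun n => ∑ t, piv (ns (φ n + N)) t * (C * Qhat) t i) atTop
        (𝓝 (∑ t, π₀ t * (C * Qhat) t i)) :=
      tendsto_finset_sum _ fun t _ => (hcoord t).mul_const _
    have hzero : ∀ n : ℕ, ∑ t, piv (ns (φ n + N)) t * (C * Qhat) t i = 0 := by
      intro n
      have h := congrFun (hCQ _ (hεmem n)) i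
      simpa [Matrix.vecMul, dotProduct] using h
    have h2 : ∑ t, π₀ t * (C * Qhat) t i = 0 := by
      have hA0 : Tendsto (fun _ : ℕ => (0:ℝ)) atTop (𝓝 (∑ t, π₀ t * (C * Qhat) t i)) := by
        simpa only [hzero] using hA
      exact tendsto_nhds_unique hA0 tendsto_const_nhds
    have h3 : (π₀ ᵥ* (C * Qhat)) i = ∑ t, π₀ t * (C * Qhat) t i := by
      simp [Matrix.vecMul, dotProduct]
    rw [h3, h2]
    rfl
  have hfinal := hchar π₀ hstat hπK.1 hπK.2 hCQ0
  exact ⟨fun n => φ n + N, hfinal ▸ hφtend⟩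
end
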